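/- arXiv:2405.10238 — 10 statements merged into one kernel-verified Lean document; each statement's English description precedes it below -/
import Mathlib

section
/- Let G be a simple d-regular graph (d ≥ 1) on a finite vertex set V of size n ≥ 1, let ε > 0 and C ≥ 16 be real numbers, and suppose that for every subset S ⊆ V the number e(S, V∖S) of edges of G with exactly one endpoint in S satisfies e(S, V∖S) ≥ C·ε·d·|S|·(n−|S|)/n. Then for any three independent sets I₁, I₂, I₃ of G, each of size at least (1/2 − ε)·n, there exist indices k ≠ l in {1,2,3} such that |I_k ∩ I_l| ≥ (1/2 − 2/C − ε)·n. -/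
/-!
For independent sets `A`, `B`, every edge leaving `A ∆ B` and every edge at `A ∩ B` ends outside
`A ∪ B`, so `e(A ∆ B, (A ∆ B)ᶜ) ≤ d (n - |A| - |B|) ≤ 2 ε d n`. Against the expansion bound this
forces `|A ∆ B| ≤ 4n/C` or `|A ∆ B| ≥ (1 - 4/C) n`; in the first case `|A ∩ B|` is as large as
claimed. The second case cannot hold for all three pairs, since every vertex lies in none or in
exactly two of the three symmetric differences, whose sizes therefore add up to at most `2n`.
-/

open Finset

/-- Number of edges of `G` with exactly one endpoint in `S` (counted via the
orientation whose first coordinate lies in `S`). -/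
def crossCount {V : Type*} [Fintype V] [DecidableEq V] (G : SimpleGraph V)
    [DecidableRel G.Adj] (S : Finset V) : ℕ :=
  (Finset.univ.filter (fun p : V × V => G.Adj p.1 p.2 ∧ p.1 ∈ S ∧ p.2 ∉ S)).card

open scoped symmDiff

namespace Finset

variable {α : Type*} [DecidableEq α]

lemma card_symmDiff_add_two_mul_card_inter (s t : Finset α) :
    #(s ∆ t) + 2 * #(s ∩ t) = #s + #t := by
  have := card_sdiff_add_card_eq_card (inter_subset_union (s := s) (t := t))
  rw [symmDiff_eq_sup_sdiff_inf, ← card_union_add_card_inter s t]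
  simp only [sup_eq_union, inf_eq_inter] at this ⊢
  omega

lemma sub_half_le_card_inter {s t : Finset α} {a b : ℝ} (hs : a ≤ #s) (ht : a ≤ #t)
    (hst : #(s ∆ t) ≤ b) : a - b / 2 ≤ #(s ∩ t) := by
  have hcard : (#(s ∆ t) : ℝ) + 2 * #(s ∩ t) = #s + #t :=
    mod_cast card_symmDiff_add_two_mul_card_inter s t
  linarith

lemma card_symmDiff_add_card_symmDiff_add_card_symmDiff_le [Fintype α] (r s t : Finset α) :
    #(r ∆ s) + #(r ∆ t) + #(s ∆ t) ≤ 2 * Fintype.card α := by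
  simp only [card_eq_sum_ite (subset_univ _), Fintype.card_eq_sum_ones, mul_sum,
    ← sum_add_distrib]
  refine sum_le_sum fun a _ => ?_
  simp only [mem_symmDiff]
  split_ifs <;> tauto

end Finset

lemma le_or_sub_le_of_mul_mul_sub_le {n δ C : ℝ} (hC : 0 < C) (hδ : 0 ≤ δ) (hδn : δ ≤ n)
    (h : C * (δ * (n - δ)) ≤ 2 * n ^ 2) : δ ≤ 4 * n / C ∨ n - δ ≤ 4 * n / C := by
  rw [le_div_iff₀ hC, le_div_iff₀ hC]
  rcases le_total δ (n / 2) with hδ2 | hδ2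
  · left
    by_contra! hlt
    nlinarith [mul_lt_mul_of_pos_right hlt (show 0 < n - δ by nlinarith)]
  · right
    by_contra! hlt
    nlinarith [mul_lt_mul_of_pos_right hlt (show 0 < δ by nlinarith)]

namespace SimpleGraph

variable {V : Type*} [Fintype V] [DecidableEq V] (G : SimpleGraph V) [DecidableRel G.Adj]
  {d : ℕ}

lemma card_adj_fst_mem (hreg : G.IsRegularOfDegree d) (W : Finset V) :
    #{p : V × V | G.Adj p.1 p.2 ∧ p.1 ∈ W} = d * #W := by
  have hdeg : ∀ u, ∑ v, (if G.Adj u v ∧ u ∈ W then 1 else 0) = if u ∈ W then d else 0 := by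
    intro u
    by_cases hu : u ∈ W
    · simp [hu, ← hreg u, ← card_neighborFinset_eq_degree, neighborFinset_eq_filter]
    · simp [hu]
  rw [card_filter, Fintype.sum_prod_type]
  simp only [hdeg, sum_ite_mem, univ_inter, sum_const, smul_eq_mul, mul_comm]

lemma card_adj_snd_mem (hreg : G.IsRegularOfDegree d) (W : Finset V) :
    #{p : V × V | G.Adj p.1 p.2 ∧ p.2 ∈ W} = d * #W := by
  rw [← G.card_adj_fst_mem hreg W]
  refine card_equiv (Equiv.prodComm V V) fun p => ?_
  simp [G.adj_comm]

lemma crossCount_symmDiff_add_le (hreg : G.IsRegularOfDegree d) {A B : Finset V}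
    (hA : G.IsIndepSet A) (hB : G.IsIndepSet B) :
    crossCount G (A ∆ B) + d * #(A ∩ B) ≤ d * #(A ∪ B)ᶜ := by
  have hout : ∀ u v, u ∈ A ∨ u ∈ B → v ∈ A ∧ v ∈ B → ¬G.Adj u v := by
    rintro u v (hu | hu) ⟨hvA, hvB⟩ huv
    · exact hA hu hvA huv.ne huv
    · exact hB hu hvB huv.ne huv
  rw [← G.card_adj_fst_mem hreg, ← G.card_adj_snd_mem hreg, crossCount,
    ← card_union_of_disjoint, symmDiff_eq_sup_sdiff_inf]
  · refine card_le_card fun ⟨u, v⟩ => ?_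
    simp only [sup_eq_union, inf_eq_inter, mem_union, mem_inter, mem_filter, mem_univ,
      true_and, mem_compl, mem_sdiff]
    rintro (⟨huv, ⟨hu, -⟩, hv⟩ | ⟨huv, hu⟩)
    · exact ⟨huv, fun hv' => hv ⟨hv', fun hv'' => hout u v hu hv'' huv⟩⟩
    · exact ⟨huv, fun hv => hout v u hv hu huv.symm⟩
  · rw [disjoint_filter]
    rintro ⟨u, v⟩ - ⟨-, hu, -⟩ ⟨-, hu'⟩
    rw [mem_symmDiff] at hu
    rw [mem_inter] at hu'
    tauto

lemma crossCount_symmDiff_le (hreg : G.IsRegularOfDegree d) {A B : Finset V}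
    (hA : G.IsIndepSet A) (hB : G.IsIndepSet B) :
    (crossCount G (A ∆ B) : ℝ) ≤ d * (Fintype.card V - #A - #B) := by
  have hcount := G.crossCount_symmDiff_add_le hreg hA hB
  rw [card_compl] at hcount
  have hcard : (#(A ∪ B) : ℝ) + #(A ∩ B) = #A + #B := mod_cast card_union_add_card_inter A B
  have hcount' :
      (crossCount G (A ∆ B) : ℝ) + d * #(A ∩ B) ≤ d * (Fintype.card V - #(A ∪ B)) := by
    rw [← Nat.cast_sub (card_le_univ _)]
    exact_mod_cast hcount
  linear_combination hcount' - d * hcard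

lemma card_symmDiff_le_or_ge (hreg : G.IsRegularOfDegree d) (hd : 0 < d) {ε C : ℝ}
    (hε : 0 < ε) (hC : 0 < C) (hV : 0 < Fintype.card V) {A B : Finset V}
    (hexp : C * ε * d * #(A ∆ B) * (Fintype.card V - #(A ∆ B)) / Fintype.card V ≤
      crossCount G (A ∆ B))
    (hA : G.IsIndepSet A) (hB : G.IsIndepSet B)
    (hsizeA : (1 / 2 - ε) * Fintype.card V ≤ #A) (hsizeB : (1 / 2 - ε) * Fintype.card V ≤ #B) :
    #(A ∆ B) ≤ 4 * Fintype.card V / C ∨ Fintype.card V - #(A ∆ B) ≤ 4 * Fintype.card V / C := by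
  set n : ℝ := (Fintype.card V : ℝ)
  set δ : ℝ := (#(A ∆ B) : ℝ)
  have hn : 0 < n := by positivity
  have hεd : 0 < ε * d := by positivity
  refine le_or_sub_le_of_mul_mul_sub_le hC (Nat.cast_nonneg _) (Nat.cast_le.2 (card_le_univ _)) ?_
  have hcut : C * ε * d * δ * (n - δ) ≤ d * (2 * ε * n) * n := by
    rw [← div_le_iff₀ hn]
    refine hexp.trans ((G.crossCount_symmDiff_le hreg hA hB).trans ?_)
    gcongr
    linarith
  refine le_of_mul_le_mul_left ?_ hεd
  linear_combination hcut

end SimpleGraph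

theorem three_indep_sets_two_intersect
    {V : Type*} [Fintype V] [DecidableEq V]
    (G : SimpleGraph V) [DecidableRel G.Adj]
    (d n : ℕ) (hd : 1 ≤ d) (hreg : G.IsRegularOfDegree d)
    (hn : n = Fintype.card V) (hn1 : 1 ≤ n)
    (ε C : ℝ) (hε : 0 < ε) (hC : 16 ≤ C)
    (hexp : ∀ S : Finset V,
      C * ε * d * (S.card : ℝ) * ((n : ℝ) - S.card) / n ≤ (crossCount G S : ℝ))
    (I : Fin 3 → Finset V)
    (hindep : ∀ k, ∀ u ∈ I k, ∀ v ∈ I k, ¬ G.Adj u v)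
    (hsize : ∀ k, ((1 : ℝ)/2 - ε) * n ≤ ((I k).card : ℝ)) :
    ∃ k l : Fin 3, k ≠ l ∧
      ((1 : ℝ)/2 - 2/C - ε) * n ≤ ((I k ∩ I l).card : ℝ) := by
  subst hn
  have hI (k : Fin 3) : G.IsIndepSet (I k) := fun u hu v hv _ => hindep k u hu v hv
  have hdichotomy (k l : Fin 3) :=
    G.card_symmDiff_le_or_ge hreg hd hε (by linarith) hn1 (hexp _) (hI k) (hI l)
      (hsize k) (hsize l)
  by_contra! hcon
  have hlarge (k l : Fin 3) (hkl : k ≠ l) :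
      Fintype.card V - #(I k ∆ I l) ≤ 4 * Fintype.card V / C := by
    refine (hdichotomy k l).resolve_left fun hsmall => ?_
    have hinter := sub_half_le_card_inter (hsize k) (hsize l) hsmall
    have hbound : (1 / 2 - 2 / C - ε) * Fintype.card V =
        (1 / 2 - ε) * Fintype.card V - 4 * Fintype.card V / C / 2 := by ring
    linarith [hcon k l hkl]
  have hsum : (#(I 0 ∆ I 1) : ℝ) + #(I 0 ∆ I 2) + #(I 1 ∆ I 2) ≤ 2 * Fintype.card V :=
    mod_cast card_symmDiff_add_card_symmDiff_add_card_symmDiff_le (I 0) (I 1) (I 2)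
  have hV : (0 : ℝ) < Fintype.card V := by exact_mod_cast hn1
  have hC' : 4 * (Fintype.card V : ℝ) / C ≤ Fintype.card V / 4 := by
    rw [div_le_div_iff₀ (by linarith) (by norm_num)]
    nlinarith
  linarith [hlarge 0 1 (by decide), hlarge 0 2 (by decide), hlarge 1 2 (by decide)]
end

section
/- Let G be a simple d-regular graph (d ≥ 1) on a finite vertex set V of size n ≥ 1, let κ ∈ (0,1] be real, and suppose that for every subset S ⊆ V the number e(S, V∖S) of edges of G with exactly one endpoint in S satisfies e(S, V∖S) ≥ κ·d·|S|·(n−|S|)/n. Then for any two independent sets I₁, I₂ of G, writing a = |V∖(I₁ ∪ I₂)|, b = |I₁ ∩ I₂| and m = a + b, one has a − b ≥ κ·m·(n−m)/n. -/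
/-!
Put `S = A ∪ B` with `A = V ∖ (I₁ ∪ I₂)` and `B = I₁ ∩ I₂`, so `|S| = m`. Every neighbour of a
vertex of `B` lies in `A`, since `B` sits inside both independent sets. So every edge leaving `S`
starts in `A`, and of the `d·a` edge-ends at `A` the `d·b` ones coming from `B` stay inside `S`.
Edge expansion of `S` then gives `κ·d·m·(n − m)/n ≤ e(S, V ∖ S) ≤ d·(a − b)`; divide by `d`.
-/

open Finset

namespace SimpleGraph

variable {V : Type*} [Fintype V] {G : SimpleGraph V} [DecidableRel G.Adj]

theorem card_interedges_univ_right (s : Finset V) :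
    #(G.interedges s univ) = ∑ v ∈ s, G.degree v := by
  rw [interedges_def, card_filter, sum_product]
  refine sum_congr rfl fun v _ => ?_
  rw [← card_neighborFinset_eq_degree, neighborFinset_eq_filter, card_filter]

theorem IsRegularOfDegree.card_interedges_univ_right {d : ℕ} (hreg : G.IsRegularOfDegree d)
    (s : Finset V) : #(G.interedges s univ) = d * #s := by
  rw [SimpleGraph.card_interedges_univ_right, sum_congr rfl fun v _ => hreg v, sum_const,
    smul_eq_mul, mul_comm]

theorem crossCount_eq_card_interedges [DecidableEq V] (S : Finset V) :
    crossCount G S = #(G.interedges S Sᶜ) := by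
  unfold crossCount
  congr 1
  ext p
  simp only [mem_filter, mem_univ, true_and, mem_interedges_iff, mem_compl]
  tauto

theorem IsRegularOfDegree.card_interedges_compl_add_le [DecidableEq V] {d : ℕ}
    (hreg : G.IsRegularOfDegree d) {A B : Finset V} (hB : ∀ v ∈ B, ∀ w, G.Adj v w → w ∈ A) :
    #(G.interedges (A ∪ B) (A ∪ B)ᶜ) + d * #B ≤ d * #A := by
  set S := A ∪ B
  have h_leave : G.interedges S Sᶜ ⊆ G.interedges A Sᶜ := by
    intro ⟨x, y⟩ hxy
    obtain ⟨hxS, hyS, hadj⟩ := G.mk_mem_interedges_iff.mp hxy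
    refine G.mk_mem_interedges_iff.mpr ⟨?_, hyS, hadj⟩
    rcases mem_union.mp hxS with hxA | hxB
    · exact hxA
    · exact absurd (mem_union_left B (hB x hxB y hadj)) (mem_compl.mp hyS)
  have h_B : G.interedges B A = G.interedges B univ := by
    ext ⟨x, y⟩
    simp only [mk_mem_interedges_iff, mem_univ, true_and]
    exact ⟨fun h => ⟨h.1, h.2.2⟩, fun h => ⟨h.1, hB x h.1 y h.2, h.2⟩⟩
  have h_AB : #(G.interedges A B) = d * #B := by
    have : Std.Symm G.Adj := ⟨fun _ _ h => h.symm⟩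
    rw [interedges, Rel.card_interedges_comm, ← interedges, h_B,
      hreg.card_interedges_univ_right]
  have h_disj : Disjoint (G.interedges A Sᶜ) (G.interedges A B) :=
    interedges_disjoint_right G A (disjoint_compl_left.mono_right subset_union_right)
  calc #(G.interedges S Sᶜ) + d * #B
      ≤ #(G.interedges A Sᶜ) + #(G.interedges A B) := by
        rw [h_AB]; exact Nat.add_le_add_right (card_le_card h_leave) _
    _ = #(G.interedges A Sᶜ ∪ G.interedges A B) := (card_union_of_disjoint h_disj).symm
    _ ≤ #(G.interedges A univ) :=
        card_le_card (union_subset (G.interedges_mono subset_rfl (subset_univ _))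
          (G.interedges_mono subset_rfl (subset_univ _)))
    _ = d * #A := hreg.card_interedges_univ_right A

end SimpleGraph

theorem wt00_minus_wt11_lower_bound_general
    {V : Type*} [Fintype V] [DecidableEq V]
    (G : SimpleGraph V) [DecidableRel G.Adj]
    (d n : ℕ) (hd : 1 ≤ d) (hreg : G.IsRegularOfDegree d)
    (κ : ℝ)
    (hexp : ∀ S : Finset V,
      κ * d * (S.card : ℝ) * ((n : ℝ) - S.card) / n ≤ (crossCount G S : ℝ))
    (I₁ I₂ : Finset V)
    (h₁ : ∀ u ∈ I₁, ∀ v ∈ I₁, ¬ G.Adj u v)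
    (h₂ : ∀ u ∈ I₂, ∀ v ∈ I₂, ¬ G.Adj u v)
    (a b m : ℝ)
    (ha : a = (((I₁ ∪ I₂)ᶜ).card : ℝ))
    (hb : b = ((I₁ ∩ I₂).card : ℝ))
    (hm : m = a + b) :
    κ * m * ((n : ℝ) - m) / n ≤ a - b := by
  set S := (I₁ ∪ I₂)ᶜ ∪ I₁ ∩ I₂
  have h_nbrs : ∀ v ∈ I₁ ∩ I₂, ∀ w, G.Adj v w → w ∈ (I₁ ∪ I₂)ᶜ := by
    intro v hv w hvw
    rw [mem_inter] at hv
    simp only [mem_compl, mem_union, not_or]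
    exact ⟨fun hw => h₁ v hv.1 w hw hvw, fun hw => h₂ v hv.2 w hw hvw⟩
  have h_cross : (crossCount G S : ℝ) + d * b ≤ d * a := by
    rw [ha, hb, SimpleGraph.crossCount_eq_card_interedges]
    exact_mod_cast hreg.card_interedges_compl_add_le h_nbrs
  have h_card : (#S : ℝ) = m := by
    rw [card_union_of_disjoint (disjoint_compl_left.mono_right inter_subset_union)]
    push_cast [hm, ha, hb]; ring
  have h_exp := hexp S
  rw [h_card] at h_exp
  have hd_pos : (0 : ℝ) < d := by exact_mod_cast hd
  refine le_of_mul_le_mul_left ?_ hd_pos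
  calc (d : ℝ) * (κ * m * (n - m) / n) = κ * d * m * (n - m) / n := by ring
    _ ≤ d * (a - b) := by linarith

theorem wt00_minus_wt11_lower_bound
    {V : Type*} [Fintype V] [DecidableEq V]
    (G : SimpleGraph V) [DecidableRel G.Adj]
    (d n : ℕ) (hd : 1 ≤ d) (hreg : G.IsRegularOfDegree d)
    (hn : n = Fintype.card V) (hn1 : 1 ≤ n)
    (κ : ℝ) (hκ0 : 0 < κ) (hκ1 : κ ≤ 1)
    (hexp : ∀ S : Finset V,
      κ * d * (S.card : ℝ) * ((n : ℝ) - S.card) / n ≤ (crossCount G S : ℝ))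
    (I₁ I₂ : Finset V)
    (h₁ : ∀ u ∈ I₁, ∀ v ∈ I₁, ¬ G.Adj u v)
    (h₂ : ∀ u ∈ I₂, ∀ v ∈ I₂, ¬ G.Adj u v)
    (a b m : ℝ)
    (ha : a = (((I₁ ∪ I₂)ᶜ).card : ℝ))
    (hb : b = ((I₁ ∩ I₂).card : ℝ))
    (hm : m = a + b) :
    κ * m * ((n : ℝ) - m) / n ≤ a - b :=
  wt00_minus_wt11_lower_bound_general G d n hd hreg κ hexp I₁ I₂ h₁ h₂ a b m ha hb hm
end

section
/- Let t ≥ 2 be an integer and ε, η ≥ 0 be reals. Let w : {0,1}^t → ℝ be nonnegative weights satisfying: (1) ∑_{α ∈ {0,1}^t} w(α) = 1; (2) for every i ∈ {1,…,t}, ∑_{α : α_i = 1} w(α) ≥ 1/2 − ε; (3) for every U ⊆ {1,…,t} with |U| ≥ 2 and every i ∈ U, w(T_{U,i}) ≤ 1/2 + η, where w(T_{U,i}) = ∑_{α ∈ T_{U,i}} w(α). Then w(0⃗) ≤ w(1⃗) + t·(ε + η), where 0⃗ and 1⃗ denote the all-zeros and all-ones strings. -/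
open Finset

namespace Wt0

variable {t : ℕ} (w : (Fin t → Bool) → ℝ)

noncomputable def SY (n : ℕ) : ℝ :=
  ∑ α ∈ univ.filter (fun α : Fin t → Bool => ∀ j : Fin t, n ≤ (j : ℕ) → α j = false), w α

noncomputable def SX (n : ℕ) : ℝ :=
  ∑ α ∈ univ.filter (fun α : Fin t → Bool => ∀ j : Fin t, n ≤ (j : ℕ) → α j = true), w α

noncomputable def SC (n : ℕ) : ℝ :=
  ∑ α ∈ univ.filter (fun α : Fin t → Bool =>
    (∀ j : Fin t, (j : ℕ) = n → α j = true) ∧ ∀ j : Fin t, n < (j : ℕ) → α j = false), w α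

noncomputable def SB (n : ℕ) : ℝ :=
  ∑ α ∈ univ.filter (fun α : Fin t → Bool =>
    (∀ j : Fin t, (j : ℕ) = n → α j = false) ∧ ∀ j : Fin t, n < (j : ℕ) → α j = true), w α

noncomputable def SA (n : ℕ) : ℝ :=
  ∑ α ∈ univ.filter (fun α : Fin t → Bool =>
    (∀ j : Fin t, (j : ℕ) = n → α j = true) ∧ ∃ j : Fin t, n < (j : ℕ) ∧ α j = true), w α

lemma SY_zero : SY w 0 = w (fun _ => false) := by
  unfold SY
  have : (univ.filter (fun α : Fin t → Bool => ∀ j : Fin t, 0 ≤ (j : ℕ) → α j = false))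
      = {fun _ => false} := by
    ext α
    simp [funext_iff]
  rw [this, sum_singleton]

lemma SX_zero : SX w 0 = w (fun _ => true) := by
  unfold SX
  have : (univ.filter (fun α : Fin t → Bool => ∀ j : Fin t, 0 ≤ (j : ℕ) → α j = true))
      = {fun _ => true} := by
    ext α
    simp [funext_iff]
  rw [this, sum_singleton]

lemma SY_succ {n : ℕ} (hn : n < t) : SY w (n + 1) = SY w n + SC w n := by
  unfold SY SC
  rw [← Finset.sum_filter_add_sum_filter_not
    (univ.filter (fun α : Fin t → Bool => ∀ j : Fin t, n + 1 ≤ (j : ℕ) → α j = false))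
    (fun α => α ⟨n, hn⟩ = true)]
  rw [Finset.filter_filter, Finset.filter_filter]
  have h1 : (univ.filter (fun α : Fin t → Bool =>
      (∀ j : Fin t, n + 1 ≤ (j : ℕ) → α j = false) ∧ α ⟨n, hn⟩ = true))
      = univ.filter (fun α : Fin t → Bool =>
      (∀ j : Fin t, (j : ℕ) = n → α j = true) ∧ ∀ j : Fin t, n < (j : ℕ) → α j = false) := by
    ext α
    simp only [mem_filter, mem_univ, true_and]
    constructor
    · rintro ⟨h, hi⟩
      refine ⟨fun j hj => ?_, fun j hj => h j (by omega)⟩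
      have hji : j = ⟨n, hn⟩ := Fin.ext hj
      rw [hji]; exact hi
    · rintro ⟨h1, h2⟩
      exact ⟨fun j hj => h2 j (by omega), h1 ⟨n, hn⟩ rfl⟩
  have h2 : (univ.filter (fun α : Fin t → Bool =>
      (∀ j : Fin t, n + 1 ≤ (j : ℕ) → α j = false) ∧ ¬(α ⟨n, hn⟩ = true)))
      = univ.filter (fun α : Fin t → Bool => ∀ j : Fin t, n ≤ (j : ℕ) → α j = false) := by
    ext α
    simp only [mem_filter, mem_univ, true_and, Bool.not_eq_true]
    constructor
    · rintro ⟨h, hi⟩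
      intro j hj
      rcases Nat.eq_or_lt_of_le hj with h' | h'
      · have hji : j = ⟨n, hn⟩ := Fin.ext h'.symm
        rw [hji]; exact hi
      · exact h j h'
    · intro h
      exact ⟨fun j hj => h j (by omega), h ⟨n, hn⟩ (le_refl n)⟩
  rw [h1, h2]
  ring

lemma SX_succ {n : ℕ} (hn : n < t) : SX w (n + 1) = SX w n + SB w n := by
  unfold SX SB
  rw [← Finset.sum_filter_add_sum_filter_not
    (univ.filter (fun α : Fin t → Bool => ∀ j : Fin t, n + 1 ≤ (j : ℕ) → α j = true))
    (fun α => α ⟨n, hn⟩ = false)]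
  rw [Finset.filter_filter, Finset.filter_filter]
  have h1 : (univ.filter (fun α : Fin t → Bool =>
      (∀ j : Fin t, n + 1 ≤ (j : ℕ) → α j = true) ∧ α ⟨n, hn⟩ = false))
      = univ.filter (fun α : Fin t → Bool =>
      (∀ j : Fin t, (j : ℕ) = n → α j = false) ∧ ∀ j : Fin t, n < (j : ℕ) → α j = true) := by
    ext α
    simp only [mem_filter, mem_univ, true_and]
    constructor
    · rintro ⟨h, hi⟩
      refine ⟨fun j hj => ?_, fun j hj => h j (by omega)⟩
      have hji : j = ⟨n, hn⟩ := Fin.ext hj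
      rw [hji]; exact hi
    · rintro ⟨h1, h2⟩
      exact ⟨fun j hj => h2 j (by omega), h1 ⟨n, hn⟩ rfl⟩
  have h2 : (univ.filter (fun α : Fin t → Bool =>
      (∀ j : Fin t, n + 1 ≤ (j : ℕ) → α j = true) ∧ ¬(α ⟨n, hn⟩ = false)))
      = univ.filter (fun α : Fin t → Bool => ∀ j : Fin t, n ≤ (j : ℕ) → α j = true) := by
    ext α
    simp only [mem_filter, mem_univ, true_and, Bool.not_eq_false]
    constructor
    · rintro ⟨h, hi⟩
      intro j hj
      rcases Nat.eq_or_lt_of_le hj with h' | h'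
      · have hji : j = ⟨n, hn⟩ := Fin.ext h'.symm
        rw [hji]; exact hi
      · exact h j h'
    · intro h
      exact ⟨fun j hj => h j (by omega), h ⟨n, hn⟩ (le_refl n)⟩
  rw [h1, h2]
  ring

lemma margSplit {n : ℕ} (hn : n < t) :
    ∑ α ∈ univ.filter (fun α : Fin t → Bool => α ⟨n, hn⟩ = true), w α
    = SA w n + SC w n := by
  unfold SA SC
  rw [← Finset.sum_filter_add_sum_filter_not
    (univ.filter (fun α : Fin t → Bool => α ⟨n, hn⟩ = true))
    (fun α => ∃ j : Fin t, n < (j : ℕ) ∧ α j = true)]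
  rw [Finset.filter_filter, Finset.filter_filter]
  congr 1
  · apply Finset.sum_congr _ (fun _ _ => rfl)
    ext α
    simp only [mem_filter, mem_univ, true_and]
    constructor
    · rintro ⟨hi, hj⟩
      exact ⟨fun j hj' => by have h : j = ⟨n, hn⟩ := Fin.ext hj'; rw [h]; exact hi, hj⟩
    · rintro ⟨h1, h2⟩
      exact ⟨h1 ⟨n, hn⟩ rfl, h2⟩
  · apply Finset.sum_congr _ (fun _ _ => rfl)
    ext α
    simp only [mem_filter, mem_univ, true_and]
    push_neg
    constructor
    · rintro ⟨hi, hj⟩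
      refine ⟨fun j hj' => by have h : j = ⟨n, hn⟩ := Fin.ext hj'; rw [h]; exact hi, fun j hj' => ?_⟩
      have := hj j hj'
      simpa using this
    · rintro ⟨h1, h2⟩
      exact ⟨h1 ⟨n, hn⟩ rfl, fun j hj' => by simp [h2 j hj']⟩

lemma Tsplit {n : ℕ} (hn : n < t) :
    ∑ α ∈ univ.filter (fun α : Fin t → Bool =>
        (α ⟨n, hn⟩ = true ∧ ∃ j ∈ (univ.filter (fun j : Fin t => n ≤ (j : ℕ))) \ {⟨n, hn⟩}, α j = true) ∨
        (α ⟨n, hn⟩ = false ∧ ∀ j ∈ (univ.filter (fun j : Fin t => n ≤ (j : ℕ))) \ {⟨n, hn⟩}, α j = true)), w α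
    = SA w n + SB w n := by
  unfold SA SB
  set U : Finset (Fin t) := univ.filter (fun j : Fin t => n ≤ (j : ℕ)) with hUdef
  set i : Fin t := ⟨n, hn⟩ with hidef
  have hmem : ∀ j : Fin t, (j ∈ U \ {i}) ↔ n < (j : ℕ) := by
    intro j
    simp only [hUdef, hidef, mem_sdiff, mem_filter, mem_univ, true_and, mem_singleton, Fin.ext_iff]
    omega
  rw [← Finset.sum_filter_add_sum_filter_not
    (univ.filter (fun α : Fin t → Bool =>
      (α i = true ∧ ∃ j ∈ U \ {i}, α j = true) ∨
      (α i = false ∧ ∀ j ∈ U \ {i}, α j = true)))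
    (fun α => α i = true)]
  rw [Finset.filter_filter, Finset.filter_filter]
  congr 1
  · apply Finset.sum_congr _ (fun _ _ => rfl)
    ext α
    simp only [mem_filter, mem_univ, true_and]
    constructor
    · rintro ⟨h, hi⟩
      refine ⟨fun j hj => by have hji : j = i := Fin.ext hj; rw [hji]; exact hi, ?_⟩
      rcases h with ⟨_, j, hj, hjt⟩ | ⟨hf, _⟩
      · exact ⟨j, (hmem j).1 hj, hjt⟩
      · rw [hi] at hf; exact absurd hf (by simp)
    · rintro ⟨h1, j, hj1, hj2⟩
      have hi : α i = true := h1 i rfl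
      exact ⟨Or.inl ⟨hi, j, (hmem j).2 hj1, hj2⟩, hi⟩
  · apply Finset.sum_congr _ (fun _ _ => rfl)
    ext α
    simp only [mem_filter, mem_univ, true_and, Bool.not_eq_true]
    constructor
    · rintro ⟨h, hi⟩
      refine ⟨fun j hj => by have hji : j = i := Fin.ext hj; rw [hji]; exact hi, ?_⟩
      rcases h with ⟨ht', _⟩ | ⟨_, hall⟩
      · rw [hi] at ht'; exact absurd ht' (by simp)
      · exact fun j hj => hall j ((hmem j).2 hj)
    · rintro ⟨h1, h2⟩
      have hi : α i = false := h1 i rfl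
      exact ⟨Or.inr ⟨hi, fun j hj => h2 j ((hmem j).1 hj)⟩, hi⟩

lemma Ucard {n : ℕ} (hn2 : n + 2 ≤ t) :
    2 ≤ (univ.filter (fun j : Fin t => n ≤ (j : ℕ))).card := by
  have hsub : ({⟨n, by omega⟩, ⟨n+1, by omega⟩} : Finset (Fin t)) ⊆
      univ.filter (fun j : Fin t => n ≤ (j : ℕ)) := by
    intro j hj
    simp only [mem_insert, mem_singleton] at hj
    rcases hj with h | h <;> simp [h]
  have hcard : ({⟨n, by omega⟩, ⟨n+1, by omega⟩} : Finset (Fin t)).card = 2 := by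
    rw [Finset.card_pair]
    simp [Fin.ext_iff]
  calc 2 = _ := hcard.symm
    _ ≤ _ := Finset.card_le_card hsub

end Wt0

theorem wt_zero_le_wt_one
    (t : ℕ) (ht : 2 ≤ t) (ε η : ℝ) (hε : 0 ≤ ε) (hη : 0 ≤ η)
    (w : (Fin t → Bool) → ℝ)
    (hw0 : ∀ α, 0 ≤ w α)
    (hsum : ∑ α : Fin t → Bool, w α = 1)
    (hsub : ∀ i : Fin t,
      (1 : ℝ)/2 - ε ≤ ∑ α ∈ Finset.univ.filter (fun α : Fin t → Bool => α i = true), w α)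
    (hT : ∀ U : Finset (Fin t), 2 ≤ U.card → ∀ i ∈ U,
      ∑ α ∈ Finset.univ.filter (fun α : Fin t → Bool =>
          (α i = true ∧ ∃ j ∈ U \ {i}, α j = true) ∨
          (α i = false ∧ ∀ j ∈ U \ {i}, α j = true)), w α ≤ (1 : ℝ)/2 + η) :
    w (fun _ => false) ≤ w (fun _ => true) + t * (ε + η) := by
  classical
  -- step inequality
  have hstep : ∀ n : ℕ, n + 2 ≤ t → Wt0.SB w n ≤ Wt0.SC w n + (ε + η) := by
    intro n hn2
    have hn : n < t := by omega
    have hiU : (⟨n, hn⟩ : Fin t) ∈ univ.filter (fun j : Fin t => n ≤ (j : ℕ)) := by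
      simp
    have hTn := hT (univ.filter (fun j : Fin t => n ≤ (j : ℕ))) (Wt0.Ucard hn2) ⟨n, hn⟩ hiU
    rw [Wt0.Tsplit w hn] at hTn
    have hm := hsub ⟨n, hn⟩
    rw [Wt0.margSplit w hn] at hm
    linarith
  -- telescoping chain
  have chain : ∀ n : ℕ, n + 2 ≤ t →
      Wt0.SX w n ≤ Wt0.SY w n - w (fun _ => false) + w (fun _ => true) + n * (ε + η) := by
    intro n
    induction n with
    | zero =>
      intro _
      rw [Wt0.SX_zero, Wt0.SY_zero]
      simp
    | succ n ih =>
      intro h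
      have h1 : n + 2 ≤ t := by omega
      have hn : n < t := by omega
      rw [Wt0.SX_succ w hn, Wt0.SY_succ w hn]
      have hs := hstep n h1
      have hi := ih h1
      push_cast
      linarith
  have hch := chain (t - 2) (by omega)
  -- final two coordinates
  have ha : t - 2 < t := by omega
  have hb : t - 1 < t := by omega
  set a : Fin t := ⟨t - 2, ha⟩ with hadef
  set b : Fin t := ⟨t - 1, hb⟩ with hbdef
  set FTT : ℝ := ∑ α ∈ univ.filter (fun α : Fin t → Bool => α a = true ∧ α b = true), w α with hFTT
  set FTF : ℝ := ∑ α ∈ univ.filter (fun α : Fin t → Bool => α a = true ∧ α b = false), w α with hFTF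
  set FFT : ℝ := ∑ α ∈ univ.filter (fun α : Fin t → Bool => α a = false ∧ α b = true), w α with hFFT
  set FFF : ℝ := ∑ α ∈ univ.filter (fun α : Fin t → Bool => α a = false ∧ α b = false), w α with hFFF
  -- split of total sum
  have hsplit_a : (∑ α : Fin t → Bool, w α)
      = (∑ α ∈ univ.filter (fun α : Fin t → Bool => α a = true), w α)
        + ∑ α ∈ univ.filter (fun α : Fin t → Bool => α a = false), w α := by
    rw [← Finset.sum_filter_add_sum_filter_not univ (fun α : Fin t → Bool => α a = true)]
    congr 1
    apply Finset.sum_congr _ (fun _ _ => rfl)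
    ext α
    simp [Bool.not_eq_true]
  have hsplit_T : (∑ α ∈ univ.filter (fun α : Fin t → Bool => α a = true), w α) = FTT + FTF := by
    rw [hFTT, hFTF,
      ← Finset.sum_filter_add_sum_filter_not
        (univ.filter (fun α : Fin t → Bool => α a = true)) (fun α => α b = true),
      Finset.filter_filter, Finset.filter_filter]
    congr 1
    apply Finset.sum_congr _ (fun _ _ => rfl)
    ext α
    simp [Bool.not_eq_true]
  have hsplit_F : (∑ α ∈ univ.filter (fun α : Fin t → Bool => α a = false), w α) = FFT + FFF := by
    rw [hFFT, hFFF,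
      ← Finset.sum_filter_add_sum_filter_not
        (univ.filter (fun α : Fin t → Bool => α a = false)) (fun α => α b = true),
      Finset.filter_filter, Finset.filter_filter]
    congr 1
    apply Finset.sum_congr _ (fun _ _ => rfl)
    ext α
    simp [Bool.not_eq_true]
  have hone : FTT + FTF + (FFT + FFF) = 1 := by
    rw [← hsplit_T, ← hsplit_F, ← hsplit_a, hsum]
  -- marginals
  have hma : (1 : ℝ)/2 - ε ≤ FTT + FTF := by
    rw [← hsplit_T]; exact hsub a
  have hmb : (1 : ℝ)/2 - ε ≤ FTT + FFT := by
    have hmb' := hsub b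
    have : (∑ α ∈ univ.filter (fun α : Fin t → Bool => α b = true), w α) = FTT + FFT := by
      rw [hFTT, hFFT,
        ← Finset.sum_filter_add_sum_filter_not
          (univ.filter (fun α : Fin t → Bool => α b = true)) (fun α => α a = true),
        Finset.filter_filter, Finset.filter_filter]
      congr 1
      · apply Finset.sum_congr _ (fun _ _ => rfl)
        ext α
        simp [Bool.not_eq_true, and_comm]
      · apply Finset.sum_congr _ (fun _ _ => rfl)
        ext α
        simp [Bool.not_eq_true, and_comm]
    linarith [this ▸ hmb']
  -- identify SX (t-2) and SY (t-2)
  have hSX : Wt0.SX w (t - 2) = FTT := by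
    rw [hFTT]
    unfold Wt0.SX
    apply Finset.sum_congr _ (fun _ _ => rfl)
    ext α
    simp only [mem_filter, mem_univ, true_and]
    constructor
    · intro h
      exact ⟨h a (by simp [hadef]), h b (by simp [hbdef]; omega)⟩
    · rintro ⟨h1, h2⟩ j hj
      have hj2 : (j : ℕ) = t - 2 ∨ (j : ℕ) = t - 1 := by omega
      rcases hj2 with h' | h'
      · have : j = a := Fin.ext (by simp [hadef, h'])
        rw [this]; exact h1
      · have : j = b := Fin.ext (by simp [hbdef, h'])
        rw [this]; exact h2
  have hSY : Wt0.SY w (t - 2) = FFF := by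
    rw [hFFF]
    unfold Wt0.SY
    apply Finset.sum_congr _ (fun _ _ => rfl)
    ext α
    simp only [mem_filter, mem_univ, true_and]
    constructor
    · intro h
      exact ⟨h a (by simp [hadef]), h b (by simp [hbdef]; omega)⟩
    · rintro ⟨h1, h2⟩ j hj
      have hj2 : (j : ℕ) = t - 2 ∨ (j : ℕ) = t - 1 := by omega
      rcases hj2 with h' | h'
      · have : j = a := Fin.ext (by simp [hadef, h'])
        rw [this]; exact h1
      · have : j = b := Fin.ext (by simp [hbdef, h'])
        rw [this]; exact h2
  rw [hSX, hSY] at hch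
  -- cast arithmetic
  have hc : ((t - 2 : ℕ) : ℝ) = (t : ℝ) - 2 := by
    have := Nat.cast_sub ht (R := ℝ)
    simpa using this
  rw [hc] at hch
  have hexp : ((t : ℝ) - 2) * (ε + η) = (t : ℝ) * (ε + η) - 2 * (ε + η) := by ring
  rw [hexp] at hch
  linarith
end

section
/- Let G be a simple d-regular graph (d ≥ 1) on a finite vertex set V of size n, and let x, y : V → {1,2,3,⊥} be two proper partial 3-colorings of G (i.e., no edge of G has both endpoints assigned the same color from {1,2,3} by x, and likewise for y). For a permutation π of {1,2,3} let V_π = {u ∈ V : x(u) ∈ {1,2,3} and y(u) = π(x(u))}, and let V_⊥ = {u ∈ V : x(u) = ⊥ or y(u) = ⊥}. Then: (a) ∑_{π even} |V_π| = ∑_{π odd} |V_π| = n − |V_⊥|, where the sums are over the three even and the three odd permutations of {1,2,3}; (b) ∑_{π ∈ Sym({1,2,3})} e(V_π, V∖V_π) ≤ n·d, where e(S, V∖S) is the number of edges of G with exactly one endpoint in S (note n·d = 2|E(G)|). -/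
open Finset

/-!
For colors `σ, τ ∈ {1,2,3}` exactly one even and exactly one odd permutation sends `σ` to `τ`, so
every vertex colored by both `x` and `y` lies in exactly one even and one odd class `V_π`; this
gives (a). For (b), count `∑_π e(V_π, V ∖ V_π)` edge by edge: an edge `uv` is cut by `V_π` iff
exactly one of its endpoints lies in `V_π`, and this happens for at most two permutations `π`.
Summing over the `n d / 2` edges gives the bound.
-/

open Equiv

lemma card_sign_eq_sending (ε : ℤˣ) (a b : Option (Fin 3)) :
    #{π ∈ univ.filter (fun π : Perm (Fin 3) => Perm.sign π = ε) |
        ∃ σ, a = some σ ∧ b = some (π σ)} = if a = none ∨ b = none then 0 else 1 := by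
  rcases Int.units_eq_one_or ε with rfl | rfl <;> revert a b <;> decide

lemma sum_card_sending_of_sign_eq {V : Type*} [Fintype V] (x y : V → Option (Fin 3))
    (ε : ℤˣ) :
    ∑ π ∈ univ.filter (fun π : Perm (Fin 3) => Perm.sign π = ε),
        #{u | ∃ σ, x u = some σ ∧ y u = some (π σ)}
      = Fintype.card V - #{u | x u = none ∨ y u = none} := by
  refine (sum_card_bipartiteAbove_eq_sum_card_bipartiteBelow
    (r := fun (π : Perm (Fin 3)) u => ∃ σ, x u = some σ ∧ y u = some (π σ))).trans ?_
  simp only [bipartiteBelow, card_sign_eq_sending]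
  rw [← card_univ,
    ← card_filter_add_card_filter_not (s := univ) (fun u => x u = none ∨ y u = none),
    Nat.add_sub_cancel_left, card_filter]
  simp only [ite_not]

section crossCount

variable {V ι : Type*} [Fintype V] [DecidableEq V] (G : SimpleGraph V) [DecidableRel G.Adj]
  [Fintype ι] (S : ι → Finset V)

lemma sum_crossCount_eq :
    ∑ i, crossCount G (S i) = ∑ p : V × V, #{i | G.Adj p.1 p.2 ∧ p.1 ∈ S i ∧ p.2 ∉ S i} := by
  simp only [crossCount, card_filter]
  exact sum_comm

lemma sum_crossCount_le (k : ℕ) (hS : ∀ u v, G.Adj u v →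
      #{i | u ∈ S i ∧ v ∉ S i} + #{i | v ∈ S i ∧ u ∉ S i} ≤ 2 * k) :
    ∑ i, crossCount G (S i) ≤ k * ∑ u, G.degree u := by
  set c : V → V → ℕ := fun u v => #{i | G.Adj u v ∧ u ∈ S i ∧ v ∉ S i}
  have hc : ∀ u v, c u v + c v u ≤ 2 * k * if G.Adj u v then 1 else 0 := by
    intro u v
    by_cases huv : G.Adj u v
    · simpa [c, huv, huv.symm] using hS u v huv
    · have hvu : ¬G.Adj v u := fun h => huv h.symm
      simp [c, huv, hvu]
  have hswap : ∑ p : V × V, c p.2 p.1 = ∑ p : V × V, c p.1 p.2 := by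
    simp only [Fintype.sum_prod_type]
    exact sum_comm
  have hdeg : ∑ p : V × V, (if G.Adj p.1 p.2 then 1 else 0) = ∑ u, G.degree u := by
    rw [Fintype.sum_prod_type]
    refine sum_congr rfl fun u _ => ?_
    rw [← card_filter, ← SimpleGraph.neighborFinset_eq_filter,
      SimpleGraph.card_neighborFinset_eq_degree]
  rw [sum_crossCount_eq]
  refine Nat.le_of_mul_le_mul_left ?_ two_pos
  calc 2 * ∑ p : V × V, c p.1 p.2 = ∑ p : V × V, (c p.1 p.2 + c p.2 p.1) := by
        rw [sum_add_distrib, hswap, two_mul]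
    _ ≤ ∑ p : V × V, 2 * k * if G.Adj p.1 p.2 then 1 else 0 := sum_le_sum fun p _ => hc p.1 p.2
    _ = 2 * (k * ∑ u, G.degree u) := by rw [← mul_sum, hdeg, mul_assoc]

end crossCount

/-- If `a, b` are colors, exactly two permutations send `a` to `b`; if moreover `c ≠ a` and
`d ≠ b` are colors, exactly one of these also sends `c` to `d`. Hence the count is
`2 + 2 - 2 · 1`. -/
lemma card_sending_xor_le_two (a b c d : Option (Fin 3))
    (hac : ∀ σ, ¬(a = some σ ∧ c = some σ)) (hbd : ∀ τ, ¬(b = some τ ∧ d = some τ)) :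
    #{π : Perm (Fin 3) | (∃ σ, a = some σ ∧ b = some (π σ)) ∧
          ¬∃ σ, c = some σ ∧ d = some (π σ)}
      + #{π : Perm (Fin 3) | (∃ σ, c = some σ ∧ d = some (π σ)) ∧
          ¬∃ σ, a = some σ ∧ b = some (π σ)} ≤ 2 := by
  revert a b c d
  decide

theorem partial_colorings_partition_and_cut_bound_general
    {V : Type*} [Fintype V] [DecidableEq V]
    (G : SimpleGraph V) [DecidableRel G.Adj]
    (d n : ℕ) (hreg : G.IsRegularOfDegree d)
    (hn : n = Fintype.card V)
    (x y : V → Option (Fin 3))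
    (hx : ∀ u v : V, G.Adj u v → ∀ σ : Fin 3, ¬(x u = some σ ∧ x v = some σ))
    (hy : ∀ u v : V, G.Adj u v → ∀ σ : Fin 3, ¬(y u = some σ ∧ y v = some σ)) :
    (∑ π ∈ Finset.univ.filter (fun π : Equiv.Perm (Fin 3) => Equiv.Perm.sign π = 1),
        (Finset.univ.filter
          (fun u : V => ∃ σ : Fin 3, x u = some σ ∧ y u = some (π σ))).card
      = n - (Finset.univ.filter (fun u : V => x u = none ∨ y u = none)).card) ∧
    (∑ π ∈ Finset.univ.filter (fun π : Equiv.Perm (Fin 3) => Equiv.Perm.sign π = -1),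
        (Finset.univ.filter
          (fun u : V => ∃ σ : Fin 3, x u = some σ ∧ y u = some (π σ))).card
      = n - (Finset.univ.filter (fun u : V => x u = none ∨ y u = none)).card) ∧
    (∑ π : Equiv.Perm (Fin 3),
        crossCount G (Finset.univ.filter
          (fun u : V => ∃ σ : Fin 3, x u = some σ ∧ y u = some (π σ)))
      ≤ n * d) := by
  subst hn
  refine ⟨sum_card_sending_of_sign_eq x y 1, sum_card_sending_of_sign_eq x y (-1), ?_⟩
  calc _ ≤ 1 * ∑ u, G.degree u := sum_crossCount_le G _ 1 fun u v huv => by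
          simpa only [mem_filter, mem_univ, true_and] using
            card_sending_xor_le_two _ _ _ _ (hx u v huv) (hy u v huv)
    _ = Fintype.card V * d := by simp [hreg.degree_eq]

theorem partial_colorings_partition_and_cut_bound
    {V : Type*} [Fintype V] [DecidableEq V]
    (G : SimpleGraph V) [DecidableRel G.Adj]
    (d n : ℕ) (hd : 1 ≤ d) (hreg : G.IsRegularOfDegree d)
    (hn : n = Fintype.card V)
    (x y : V → Option (Fin 3))
    (hx : ∀ u v : V, G.Adj u v → ∀ σ : Fin 3, ¬(x u = some σ ∧ x v = some σ))
    (hy : ∀ u v : V, G.Adj u v → ∀ σ : Fin 3, ¬(y u = some σ ∧ y v = some σ)) :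
    (∑ π ∈ Finset.univ.filter (fun π : Equiv.Perm (Fin 3) => Equiv.Perm.sign π = 1),
        (Finset.univ.filter
          (fun u : V => ∃ σ : Fin 3, x u = some σ ∧ y u = some (π σ))).card
      = n - (Finset.univ.filter (fun u : V => x u = none ∨ y u = none)).card) ∧
    (∑ π ∈ Finset.univ.filter (fun π : Equiv.Perm (Fin 3) => Equiv.Perm.sign π = -1),
        (Finset.univ.filter
          (fun u : V => ∃ σ : Fin 3, x u = some σ ∧ y u = some (π σ))).card
      = n - (Finset.univ.filter (fun u : V => x u = none ∨ y u = none)).card) ∧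
    (∑ π : Equiv.Perm (Fin 3),
        crossCount G (Finset.univ.filter
          (fun u : V => ∃ σ : Fin 3, x u = some σ ∧ y u = some (π σ)))
      ≤ n * d) :=
  partial_colorings_partition_and_cut_bound_general G d n hreg hn x y hx hy
end

section
/- Let G be a simple d-regular graph (d ≥ 1) on a finite vertex set V of size n ≥ 1, let κ ∈ (0,1] be real, and suppose that for every subset S ⊆ V the number e(S, V∖S) of edges of G with exactly one endpoint in S satisfies e(S, V∖S) ≥ κ·d·|S|·(n−|S|)/n. Let x, y : V → {1,2,3,⊥} be two proper partial 3-colorings of G, and for each permutation π of {1,2,3} let wt(S_π) = |{u ∈ V : x(u) ∈ {1,2,3} and y(u) = π(x(u))}|/n, and let wt(S_⊥) = |{u : x(u) = ⊥ or y(u) = ⊥}|/n. Then ∑_{π ∈ Sym({1,2,3})} wt(S_π)² ≥ 2 − 1/κ − 2·wt(S_⊥). -/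
open Finset

lemma perm_count_two' (σ τ : Fin 3) :
    (univ.filter (fun π : Equiv.Perm (Fin 3) => τ = π σ)).card = 2 := by revert σ τ; decide

lemma perm_count_pair' : ∀ σ₁ σ₂ τ₁ τ₂ : Fin 3, σ₁ ≠ σ₂ → τ₁ ≠ τ₂ →
    (univ.filter (fun π : Equiv.Perm (Fin 3) => τ₁ = π σ₁ ∧ ¬ τ₂ = π σ₂)).card +
    (univ.filter (fun π : Equiv.Perm (Fin 3) => τ₂ = π σ₂ ∧ ¬ τ₁ = π σ₁)).card ≤ 2 := by decide

section Aux
variable {V : Type*} (x y : V → Option (Fin 3))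

lemma memcount_eq (u : V) :
    (univ.filter (fun π : Equiv.Perm (Fin 3) =>
      ∃ σ, x u = some σ ∧ y u = some (π σ))).card
      = if (x u = none ∨ y u = none) then 0 else 2 := by
  rcases hxu : x u with _ | σ <;> rcases hyu : y u with _ | τ <;>
    simp [exists_eq_left', perm_count_two']

lemma f_pair_le (u v : V)
    (hxe : ∀ σ : Fin 3, ¬(x u = some σ ∧ x v = some σ))
    (hye : ∀ σ : Fin 3, ¬(y u = some σ ∧ y v = some σ)) :
    (univ.filter (fun π : Equiv.Perm (Fin 3) =>
        (∃ σ, x u = some σ ∧ y u = some (π σ)) ∧ ¬(∃ σ, x v = some σ ∧ y v = some (π σ)))).card +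
    (univ.filter (fun π : Equiv.Perm (Fin 3) =>
        (∃ σ, x v = some σ ∧ y v = some (π σ)) ∧ ¬(∃ σ, x u = some σ ∧ y u = some (π σ)))).card ≤ 2 := by
  rcases hxu : x u with _ | σ₁ <;> rcases hyu : y u with _ | τ₁ <;>
    rcases hxv : x v with _ | σ₂ <;> rcases hyv : y v with _ | τ₂ <;>
    (try simp only [Option.some.injEq, exists_eq_left', false_and, and_false, exists_false,
      not_false_eq_true, and_true, true_and, filter_False, filter_const, card_empty,
      Nat.add_zero, Nat.zero_add, zero_add, add_zero]) <;>
    try simp [perm_count_two']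
  · have hσ : σ₁ ≠ σ₂ := by rintro rfl; exact hxe σ₁ ⟨hxu, hxv⟩
    have hτ : τ₁ ≠ τ₂ := by rintro rfl; exact hye τ₁ ⟨hyu, hyv⟩
    exact perm_count_pair' σ₁ σ₂ τ₁ τ₂ hσ hτ
end Aux

theorem sum_of_squared_agreements_lower_bound
    {V : Type*} [Fintype V] [DecidableEq V]
    (G : SimpleGraph V) [DecidableRel G.Adj]
    (d n : ℕ) (hd : 1 ≤ d) (hreg : G.IsRegularOfDegree d)
    (hn : n = Fintype.card V) (hn1 : 1 ≤ n)
    (κ : ℝ) (hκ0 : 0 < κ) (hκ1 : κ ≤ 1)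
    (hexp : ∀ S : Finset V,
      κ * d * (S.card : ℝ) * ((n : ℝ) - S.card) / n ≤ (crossCount G S : ℝ))
    (x y : V → Option (Fin 3))
    (hx : ∀ u v : V, G.Adj u v → ∀ σ : Fin 3, ¬(x u = some σ ∧ x v = some σ))
    (hy : ∀ u v : V, G.Adj u v → ∀ σ : Fin 3, ¬(y u = some σ ∧ y v = some σ))
    (wt : Equiv.Perm (Fin 3) → ℝ) (wtBot : ℝ)
    (hwt : ∀ π : Equiv.Perm (Fin 3),
      wt π = ((Finset.univ.filter
        (fun u : V => ∃ σ : Fin 3, x u = some σ ∧ y u = some (π σ))).card : ℝ) / n)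
    (hwtBot : wtBot =
      ((Finset.univ.filter (fun u : V => x u = none ∨ y u = none)).card : ℝ) / n) :
    2 - 1/κ - 2 * wtBot ≤ ∑ π : Equiv.Perm (Fin 3), (wt π)^2 := by
  classical
  set S : Equiv.Perm (Fin 3) → Finset V := fun π => univ.filter
      (fun u : V => ∃ σ : Fin 3, x u = some σ ∧ y u = some (π σ)) with hS
  set T := univ.filter (fun p : V × V => G.Adj p.1 p.2) with hT
  -- |T| = n * d
  have hTcard : T.card = n * d := by
    rw [hT, Finset.card_filter, Fintype.sum_prod_type]
    have : ∀ u : V, (∑ v : V, if G.Adj u v then 1 else 0) = d := by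
      intro u
      rw [← Finset.card_filter, ← SimpleGraph.neighborFinset_eq_filter]
      exact hreg u
    simp [this, hn, Finset.card_univ]
  -- key 1 : sum of |S π| = 2 * |colored|
  have key1 : ∑ π : Equiv.Perm (Fin 3), (S π).card
      = 2 * (univ.filter (fun u : V => ¬(x u = none ∨ y u = none))).card := by
    simp only [hS, Finset.card_filter]
    rw [Finset.sum_comm]
    have : ∀ u : V, (∑ π : Equiv.Perm (Fin 3),
        if (∃ σ : Fin 3, x u = some σ ∧ y u = some (π σ)) then 1 else 0)
        = if (x u = none ∨ y u = none) then 0 else 2 := by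
      intro u
      rw [← Finset.card_filter]
      exact memcount_eq x y u
    rw [Finset.sum_congr rfl (fun u _ => this u)]
    rw [Finset.sum_ite, Finset.sum_const, Finset.sum_const]
    simp [mul_comm]
  -- key 2 : sum of crossCounts ≤ n * d
  have key2 : 2 * ∑ π : Equiv.Perm (Fin 3), crossCount G (S π) ≤ 2 * (n * d) := by
    set g : V × V → ℕ := fun p => (univ.filter (fun π : Equiv.Perm (Fin 3) =>
        p.1 ∈ S π ∧ p.2 ∉ S π)).card with hg
    have expand : ∑ π : Equiv.Perm (Fin 3), crossCount G (S π) = ∑ p ∈ T, g p := by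
      have e1 : ∀ π, crossCount G (S π) = ∑ p ∈ T, (if p.1 ∈ S π ∧ p.2 ∉ S π then 1 else 0) := by
        intro π
        rw [crossCount, Finset.card_filter, hT, Finset.sum_filter]
        apply Finset.sum_congr rfl
        intro p _
        by_cases h : G.Adj p.1 p.2 <;> simp [h]
      rw [Finset.sum_congr rfl (fun π _ => e1 π), Finset.sum_comm]
      apply Finset.sum_congr rfl
      intro p _
      rw [← Finset.card_filter]
    have swapsum : ∑ p ∈ T, g (Prod.swap p) = ∑ p ∈ T, g p := by
      apply Finset.sum_equiv (Equiv.prodComm V V)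
      · intro p
        simp only [hT, Finset.mem_filter, Finset.mem_univ, true_and, Equiv.prodComm_apply]
        exact ⟨fun h => h.symm, fun h => h.symm⟩
      · intro p _
        rfl
    have pointwise : ∀ p ∈ T, g p + g (Prod.swap p) ≤ 2 := by
      intro p hp
      have hadj : G.Adj p.1 p.2 := by
        rw [hT] at hp; exact (Finset.mem_filter.mp hp).2
      have := f_pair_le x y p.1 p.2 (hx p.1 p.2 hadj) (hy p.1 p.2 hadj)
      simp only [hg, hS, Prod.fst_swap, Prod.snd_swap, Finset.mem_filter,
        Finset.mem_univ, true_and]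
      convert this using 3
    calc 2 * ∑ π : Equiv.Perm (Fin 3), crossCount G (S π)
        = ∑ p ∈ T, g p + ∑ p ∈ T, g (Prod.swap p) := by rw [expand, swapsum, two_mul]
      _ = ∑ p ∈ T, (g p + g (Prod.swap p)) := (Finset.sum_add_distrib).symm
      _ ≤ ∑ p ∈ T, 2 := Finset.sum_le_sum pointwise
      _ = 2 * T.card := by rw [Finset.sum_const, smul_eq_mul, mul_comm]
      _ = 2 * (n * d) := by rw [hTcard]
  have key2' : ∑ π : Equiv.Perm (Fin 3), crossCount G (S π) ≤ n * d :=
    Nat.le_of_mul_le_mul_left key2 (by norm_num)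
  -- real setup
  set N : ℝ := (n : ℝ) with hN
  have hNpos : (0 : ℝ) < N := by
    rw [hN]; exact_mod_cast Nat.lt_of_lt_of_le Nat.zero_lt_one hn1
  have hdpos : (0 : ℝ) < (d : ℝ) := by exact_mod_cast Nat.lt_of_lt_of_le Nat.zero_lt_one hd
  set A : ℝ := ∑ π : Equiv.Perm (Fin 3), ((S π).card : ℝ) with hA
  set Q : ℝ := ∑ π : Equiv.Perm (Fin 3), ((S π).card : ℝ)^2 with hQ
  set bR : ℝ := ((univ.filter (fun u : V => x u = none ∨ y u = none)).card : ℝ) with hbR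
  -- A = 2 * (N - bR)
  have hbc : (univ.filter (fun u : V => x u = none ∨ y u = none)).card
      + (univ.filter (fun u : V => ¬(x u = none ∨ y u = none))).card = n := by
    rw [Finset.card_filter_add_card_filter_not, Finset.card_univ, hn]
  have hAval : A = 2 * (N - bR) := by
    have h1 : A = 2 * ((univ.filter (fun u : V => ¬(x u = none ∨ y u = none))).card : ℝ) := by
      rw [hA]; exact_mod_cast congrArg (Nat.cast : ℕ → ℝ) key1
    have h2 : bR + ((univ.filter (fun u : V => ¬(x u = none ∨ y u = none))).card : ℝ) = N := by
      rw [hbR, hN]; exact_mod_cast hbc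
    linarith
  -- expansion bound summed
  have h5 : ∑ π : Equiv.Perm (Fin 3), κ * d * ((S π).card : ℝ) * (N - (S π).card) / N
      ≤ N * d := by
    calc ∑ π : Equiv.Perm (Fin 3), κ * d * ((S π).card : ℝ) * (N - (S π).card) / N
        ≤ ∑ π : Equiv.Perm (Fin 3), (crossCount G (S π) : ℝ) :=
          Finset.sum_le_sum (fun π _ => hexp (S π))
      _ ≤ N * d := by
          rw [← Nat.cast_sum]
          rw [hN]
          exact_mod_cast key2'
  have hEq : ∑ π : Equiv.Perm (Fin 3), κ * d * ((S π).card : ℝ) * (N - (S π).card) / N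
      = κ * d * (N * A - Q) / N := by
    rw [hA, hQ, Finset.mul_sum, ← Finset.sum_sub_distrib, Finset.mul_sum, ← Finset.sum_div]
    congr 1
    apply Finset.sum_congr rfl
    intro π _
    ring
  rw [hEq] at h5
  -- clear denominators
  have h6 : κ * (N * A - Q) ≤ N ^ 2 := by
    rw [div_le_iff₀ hNpos] at h5
    nlinarith [h5, hdpos, hNpos]
  -- rewrite goal
  have hgoal : ∑ π : Equiv.Perm (Fin 3), (wt π)^2 = Q / N ^ 2 := by
    rw [hQ, Finset.sum_div]
    apply Finset.sum_congr rfl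
    intro π _
    rw [hwt π, div_pow, hN]
  rw [hgoal, hwtBot]
  rw [le_div_iff₀ (by positivity : (0:ℝ) < N ^ 2)]
  have hexpand : (2 - 1/κ - 2 * (bR / N)) * N ^ 2 = N * A - N ^ 2 / κ := by
    rw [hAval]
    field_simp
    ring
  rw [hexpand]
  have h7 : (N * A - Q) * κ ≤ N ^ 2 := by nlinarith [h6]
  rw [sub_le_iff_le_add]
  have h8 : N * A - Q ≤ N ^ 2 / κ := (le_div_iff₀ hκ0).mpr h7
  linarith
end

section
/- Fix a real γ with 0 ≤ γ ≤ 0.01. Let z₁, z₂, …, z₆ be real numbers such that 0 ≤ z_i ≤ 1/2 + γ for each i, z₁ + z₂ + z₃ = z₄ + z₅ + z₆ ≤ 1, and z₁² + z₂² + ⋯ + z₆² ≥ 1 − γ. Then at least one of z₁, z₂, z₃ is ≤ 8γ, and at least one of z₄, z₅, z₆ is ≤ 8γ. -/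
set_option maxHeartbeats 1000000 in
lemma aux_triple (γ a b c d e f : ℝ) (hγ0 : 0 ≤ γ) (hγ1 : γ ≤ 0.01)
    (h₁ : 0 ≤ a ∧ a ≤ 1/2 + γ) (h₂ : 0 ≤ b ∧ b ≤ 1/2 + γ)
    (h₃ : 0 ≤ c ∧ c ≤ 1/2 + γ) (h₄ : 0 ≤ d ∧ d ≤ 1/2 + γ)
    (h₅ : 0 ≤ e ∧ e ≤ 1/2 + γ) (h₆ : 0 ≤ f ∧ f ≤ 1/2 + γ)
    (hsum : a + b + c = d + e + f) (hsum1 : a + b + c ≤ 1)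
    (hnorm : 1 - γ ≤ a^2 + b^2 + c^2 + d^2 + e^2 + f^2)
    (ha : 8*γ < a) (hb : 8*γ < b) (hc : 8*γ < c) : False := by
  have p1 : 0 ≤ a * (1/2 + γ - a) := mul_nonneg h₁.1 (by linarith [h₁.2])
  have p2 : 0 ≤ b * (1/2 + γ - b) := mul_nonneg h₂.1 (by linarith [h₂.2])
  have p3 : 0 ≤ c * (1/2 + γ - c) := mul_nonneg h₃.1 (by linarith [h₃.2])
  have p4 : 0 ≤ d * (1/2 + γ - d) := mul_nonneg h₄.1 (by linarith [h₄.2])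
  have p5 : 0 ≤ e * (1/2 + γ - e) := mul_nonneg h₅.1 (by linarith [h₅.2])
  have p6 : 0 ≤ f * (1/2 + γ - f) := mul_nonneg h₆.1 (by linarith [h₆.2])
  have hγs : 0 ≤ γ * (1 - (a + b + c)) := mul_nonneg hγ0 (by linarith)
  have key : a * (1/2 + γ - a) + b * (1/2 + γ - b) + c * (1/2 + γ - c) ≤ 3 * γ := by
    nlinarith [hnorm, hγs, hsum, p4, p5, p6]
  have hq : 0 ≤ γ * (0.01 - γ) := mul_nonneg hγ0 (by linarith)
  rcases (show a ≤ 1/3 ∨ b ≤ 1/3 ∨ c ≤ 1/3 by by_contra h; push_neg at h; linarith [h.1, h.2.1, h.2.2]) with hm | hm | hm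
  · have hp : 0 < (a - 8*γ) * (1/2 + γ - 8*γ - a) :=
      mul_pos (by linarith) (by linarith)
    nlinarith [key, p2, p3, hp, hq]
  · have hp : 0 < (b - 8*γ) * (1/2 + γ - 8*γ - b) :=
      mul_pos (by linarith) (by linarith)
    nlinarith [key, p1, p3, hp, hq]
  · have hp : 0 < (c - 8*γ) * (1/2 + γ - 8*γ - c) :=
      mul_pos (by linarith) (by linarith)
    nlinarith [key, p1, p2, hp, hq]

theorem six_variable_lemma
    (γ : ℝ) (hγ0 : 0 ≤ γ) (hγ1 : γ ≤ 0.01)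
    (z₁ z₂ z₃ z₄ z₅ z₆ : ℝ)
    (h₁ : 0 ≤ z₁ ∧ z₁ ≤ 1/2 + γ) (h₂ : 0 ≤ z₂ ∧ z₂ ≤ 1/2 + γ)
    (h₃ : 0 ≤ z₃ ∧ z₃ ≤ 1/2 + γ) (h₄ : 0 ≤ z₄ ∧ z₄ ≤ 1/2 + γ)
    (h₅ : 0 ≤ z₅ ∧ z₅ ≤ 1/2 + γ) (h₆ : 0 ≤ z₆ ∧ z₆ ≤ 1/2 + γ)
    (hsum : z₁ + z₂ + z₃ = z₄ + z₅ + z₆)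
    (hsum1 : z₁ + z₂ + z₃ ≤ 1)
    (hnorm : 1 - γ ≤ z₁^2 + z₂^2 + z₃^2 + z₄^2 + z₅^2 + z₆^2) :
    (z₁ ≤ 8*γ ∨ z₂ ≤ 8*γ ∨ z₃ ≤ 8*γ) ∧ (z₄ ≤ 8*γ ∨ z₅ ≤ 8*γ ∨ z₆ ≤ 8*γ) := by
  constructor
  · by_contra h
    push_neg at h
    exact aux_triple γ z₁ z₂ z₃ z₄ z₅ z₆ hγ0 hγ1 h₁ h₂ h₃ h₄ h₅ h₆ hsum hsum1 hnorm
      h.1 h.2.1 h.2.2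
  · by_contra h
    push_neg at h
    exact aux_triple γ z₄ z₅ z₆ z₁ z₂ z₃ hγ0 hγ1 h₄ h₅ h₆ h₁ h₂ h₃ hsum.symm
      (by linarith) (by linarith) h.1 h.2.1 h.2.2
end

section
/- Let Σ = {1,2,3,⊥} and let ε, γ be reals with 0 ≤ ε, γ ≤ 0.001. Let w : Σ³ → ℝ satisfy: 0 ≤ w(α) ≤ 1 for all α ∈ Σ³; ∑_{α ∈ Σ³} w(α) = 1; for every coordinate k ∈ {1,2,3} and every color σ ∈ {1,2,3}, ∑_{α : α_k = σ} w(α) ≤ 1/2 + γ; for every coordinate k ∈ {1,2,3}, ∑_{α : α_k = ⊥} w(α) ≤ ε; and for every pair 1 ≤ i < j ≤ 3, ∑_{π ∈ Sym({1,2,3})} w(S_π^{(ij)})² ≥ 1 − γ. Then there exist a pair i < j and a permutation π of {1,2,3} such that w(S_π^{(ij)}) ≥ 1/2 + γ. -/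
/-!
Suppose every `w(S_π^{(ij)})` is below `c = 1/2 + γ`. For a fixed pair `(i, j)` a string lies
in at most two of the six sets `S_π` and in at most one of the three sets `S_π` with `π` a
cyclic shift, so `∑_π w(S_π) (c - w(S_π)) ≤ 2c - (1 - γ) = 3γ`: every `w(S_π)` is close to
`0` or to `c`, and some cyclic shift has weight at most `7γ`.

A fully colored string `α` lies in the cell `(α₁ - α₀, α₂ - α₀)` of the torus `(ℤ/3)²`, and the
cyclic-shift sets of the three pairs are the lines of this torus in three directions.
Discarding the three light lines leaves either three cells, pairwise on a common line, which
then carry weight at most `3c/2 < 1 - 3ε - 21γ`, or two cells on no common line. In the latter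
case atoms of different cells agree in exactly one coordinate, and summing `∑_π w(S_π)²` over
the three pairs gives at most `3F² + 3G² + 2FG + 3c² + 12c(1 - F - G) < 3(1 - γ)`, where `F`
and `G` are the weights of the two cells.
-/

open Finset

/-- For coordinates `i j` and a permutation `π` of the three colors, the set of
strings `α ∈ Σ³` (with `Σ = {1,2,3,⊥}` modeled as `Option (Fin 3)`) such that
`α i` is a color and `α j = π (α i)`. -/
def Spair (i j : Fin 3) (π : Equiv.Perm (Fin 3)) : Finset (Fin 3 → Option (Fin 3)) :=
  Finset.univ.filter (fun α : Fin 3 → Option (Fin 3) =>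
    ∃ σ : Fin 3, α i = some σ ∧ α j = some (π σ))

open Function

namespace TwentySeven

section DoubleCounting

variable {ι β : Type*}

theorem sum_union_le [DecidableEq β] {s t : Finset β} {f : β → ℝ} (hf : ∀ b ∈ s ∩ t, 0 ≤ f b) :
    ∑ b ∈ s ∪ t, f b ≤ ∑ b ∈ s, f b + ∑ b ∈ t, f b := by
  rw [← sum_union_inter]
  exact le_add_of_nonneg_right (sum_nonneg hf)

theorem sum_univ_le_of_cover [Fintype β] [DecidableEq β] {f : β → ℝ} (hf : ∀ b, 0 ≤ f b)
    {A B C D : Finset β} (h : ∀ b, b ∈ A ∨ b ∈ B ∨ b ∈ C ∨ b ∈ D) :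
    ∑ b, f b ≤ ∑ b ∈ A, f b + ∑ b ∈ B, f b + ∑ b ∈ C, f b + ∑ b ∈ D, f b := by
  have hcover : A ∪ (B ∪ (C ∪ D)) = univ := eq_univ_of_forall fun b => by simpa using h b
  have h₁ := sum_union_le (s := A) (t := B ∪ (C ∪ D)) fun b _ => hf b
  have h₂ := sum_union_le (s := B) (t := C ∪ D) fun b _ => hf b
  have h₃ := sum_union_le (s := C) (t := D) fun b _ => hf b
  rw [hcover] at h₁
  linarith

variable [Fintype ι] [DecidableEq β]

theorem sum_sum_le_mul_sum_of_card_le (S : ι → Finset β) {s : Finset β} (hS : ∀ i, S i ⊆ s)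
    {w : β → ℝ} (hw : ∀ b ∈ s, 0 ≤ w b) {k : ℕ} (hk : ∀ b ∈ s, #{i | b ∈ S i} ≤ k) :
    ∑ i, ∑ b ∈ S i, w b ≤ k * ∑ b ∈ s, w b := by
  calc ∑ i, ∑ b ∈ S i, w b = ∑ i, ∑ b ∈ s, if b ∈ S i then w b else 0 := by
        refine sum_congr rfl fun i _ => ?_
        rw [sum_ite_mem, inter_eq_right.mpr (hS i)]
    _ = ∑ b ∈ s, (#{i | b ∈ S i} : ℝ) * w b := by
        rw [sum_comm]
        refine sum_congr rfl fun b _ => ?_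
        rw [← sum_filter, sum_const, nsmul_eq_mul]
    _ ≤ ∑ b ∈ s, (k : ℝ) * w b :=
        sum_le_sum fun b hb => mul_le_mul_of_nonneg_right (by exact_mod_cast hk b hb) (hw b hb)
    _ = k * ∑ b ∈ s, w b := (mul_sum ..).symm

theorem sum_sq_sum_eq [Fintype β] (S : ι → Finset β) (w : β → ℝ) :
    ∑ i, (∑ b ∈ S i, w b) ^ 2 = ∑ a, ∑ b, (#{i | a ∈ S i ∧ b ∈ S i} : ℝ) * (w a * w b) := by
  have hS : ∀ i, ∑ b ∈ S i, w b = ∑ b, if b ∈ S i then w b else 0 := fun i => by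
    rw [sum_ite_mem, univ_inter]
  simp_rw [hS, sq, sum_mul_sum, ite_mul, mul_ite, mul_zero, zero_mul, ite_self, ← ite_and]
  rw [sum_comm]
  refine sum_congr rfl fun a _ => ?_
  rw [sum_comm]
  refine sum_congr rfl fun b _ => ?_
  rw [← sum_filter, sum_const, nsmul_eq_mul]

end DoubleCounting

section Spair

variable {i j : Fin 3} {π : Equiv.Perm (Fin 3)} {α : Fin 3 → Option (Fin 3)}

theorem mem_Spair : α ∈ Spair i j π ↔ ∃ σ, α i = some σ ∧ α j = some (π σ) := by
  simp [Spair]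

theorem mem_Spair_iff_of_eq_some {x y : Fin 3} (hx : α i = some x) (hy : α j = some y) :
    α ∈ Spair i j π ↔ π x = y := by
  simp [Spair, hx, hy, eq_comm]

theorem card_perm_filter_apply_eq (x y x' y' : Fin 3) :
    #{π : Equiv.Perm (Fin 3) | π x = y ∧ π x' = y'} =
      if x = x' then (if y = y' then 2 else 0) else (if y = y' then 0 else 1) := by
  revert x y x' y'
  decide

theorem card_filter_mem_Spair_le_two (i j : Fin 3) (α : Fin 3 → Option (Fin 3)) :
    #{π | α ∈ Spair i j π} ≤ 2 := by
  rcases hx : α i with _ | x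
  · simp [Spair, hx]
  · have key : ∀ x : Fin 3, ∀ o : Option (Fin 3),
        #{π : Equiv.Perm (Fin 3) | o = some (π x)} ≤ 2 := by decide
    simpa [Spair, hx] using key x (α j)

theorem card_filter_mem_Spair_addLeft_le_one (i j : Fin 3) (α : Fin 3 → Option (Fin 3)) :
    #{d | α ∈ Spair i j (Equiv.addLeft d)} ≤ 1 := by
  refine card_le_one.mpr fun d hd d' hd' => ?_
  simp only [mem_filter, mem_univ, true_and, mem_Spair, Equiv.coe_addLeft] at hd hd'
  obtain ⟨σ, hσ, hd⟩ := hd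
  obtain ⟨σ', hσ', hd'⟩ := hd'
  rw [hσ, Option.some_inj] at hσ'
  subst hσ'
  simpa using hd.symm.trans hd'

end Spair

theorem mul_sub_le_of_le_sum_sq {ι : Type*} [Fintype ι] {x : ι → ℝ} {γ : ℝ}
    (hx0 : ∀ i, 0 ≤ x i) (hx : ∀ i, x i ≤ 1/2 + γ) (hsum : ∑ i, x i ≤ 2)
    (hsq : 1 - γ ≤ ∑ i, x i ^ 2) (i : ι) : x i * (1/2 + γ - x i) ≤ 3 * γ := by
  have hc : 0 ≤ 1/2 + γ := (hx0 i).trans (hx i)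
  calc x i * (1/2 + γ - x i) ≤ ∑ k, x k * (1/2 + γ - x k) :=
        single_le_sum (fun k _ => mul_nonneg (hx0 k) (sub_nonneg.2 (hx k))) (mem_univ i)
    _ = (1/2 + γ) * ∑ k, x k - ∑ k, x k ^ 2 := by
        rw [mul_sum, ← sum_sub_distrib]
        exact sum_congr rfl fun k _ => by ring
    _ ≤ 3 * γ := by nlinarith

theorem exists_light_shift {w : (Fin 3 → Option (Fin 3)) → ℝ} (hw0 : ∀ α, 0 ≤ w α)
    (hsum : ∑ α, w α = 1) {γ : ℝ} (hγ0 : 0 ≤ γ) (hγ1 : γ ≤ 0.001) {i j : Fin 3}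
    (hle : ∀ π, ∑ α ∈ Spair i j π, w α ≤ 1/2 + γ)
    (hsq : 1 - γ ≤ ∑ π, (∑ α ∈ Spair i j π, w α) ^ 2) :
    ∃ d, ∑ α ∈ Spair i j (Equiv.addLeft d), w α ≤ 7 * γ := by
  set x : Equiv.Perm (Fin 3) → ℝ := fun π => ∑ α ∈ Spair i j π, w α
  have hx0 : ∀ π, 0 ≤ x π := fun π => sum_nonneg fun α _ => hw0 α
  have htwo : ∑ π, x π ≤ 2 := by
    simpa [hsum] using sum_sum_le_mul_sum_of_card_le (Spair i j) (fun _ => subset_univ _)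
      (fun α _ => hw0 α) (fun α _ => card_filter_mem_Spair_le_two i j α)
  have hone : ∑ d, x (Equiv.addLeft d) ≤ 1 := by
    simpa [hsum] using sum_sum_le_mul_sum_of_card_le (fun d => Spair i j (Equiv.addLeft d))
      (fun _ => subset_univ _) (fun α _ => hw0 α)
      (fun α _ => card_filter_mem_Spair_addLeft_le_one i j α)
  obtain ⟨d, -, hd⟩ := exists_min_image univ (fun d => x (Equiv.addLeft d)) univ_nonempty
  have hthird : x (Equiv.addLeft d) ≤ 1/3 := by
    rw [Fin.sum_univ_three] at hone
    linarith [hd 0 (mem_univ _), hd 1 (mem_univ _), hd 2 (mem_univ _)]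
  have hslack := mul_sub_le_of_le_sum_sq hx0 hle htwo hsq (Equiv.addLeft d)
  have hsmall : x (Equiv.addLeft d) ≤ 18 * γ := by nlinarith [hx0 (Equiv.addLeft d)]
  exact ⟨d, by nlinarith [hx0 (Equiv.addLeft d)]⟩

section Cells

def cellOffset (c : Fin 3 × Fin 3) : Fin 3 → Fin 3 := ![0, c.1, c.2]

/-- Fully colored strings are parametrized by a cell `c = (α 1 - α 0, α 2 - α 0)` and the
first color `a = α 0`. A cyclic shift `σ ↦ d + σ` of the colors only moves `a`, so
`Spair i j (addLeft d)` contains exactly the cells `c` with `lineIdx i j c = d`. -/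
def cellAtom (c : Fin 3 × Fin 3) (a : Fin 3) : Fin 3 → Option (Fin 3) :=
  fun k => some (a + cellOffset c k)

def lineIdx (i j : Fin 3) (c : Fin 3 × Fin 3) : Fin 3 := cellOffset c j - cellOffset c i

def cellMass (w : (Fin 3 → Option (Fin 3)) → ℝ) (c : Fin 3 × Fin 3) : ℝ :=
  ∑ a, w (cellAtom c a)

theorem ne_of_injective_cellOffset_sub {p q : Fin 3 × Fin 3}
    (h : Injective (cellOffset q - cellOffset p)) : p ≠ q := by
  rintro rfl
  exact absurd (@h 0 1 (by simp)) (by decide)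

theorem add_cellOffset_eq_iff {p q : Fin 3 × Fin 3} {a b k : Fin 3} :
    a + cellOffset p k = b + cellOffset q k ↔ (cellOffset q - cellOffset p) k = a - b := by
  rw [Pi.sub_apply, sub_eq_sub_iff_add_eq_add, eq_comm, add_comm b]

theorem cellAtom_injective : Injective (uncurry cellAtom) := by
  rintro ⟨c, a⟩ ⟨c', a'⟩ h
  obtain rfl : a = a' := by simpa [cellAtom, cellOffset] using congrFun h 0
  have h1 : c.1 = c'.1 := by simpa [cellAtom, cellOffset] using congrFun h 1
  have h2 : c.2 = c'.2 := by simpa [cellAtom, cellOffset] using congrFun h 2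
  rw [Prod.ext h1 h2]

theorem cellAtom_mem_Spair_addLeft_iff {i j d : Fin 3} {c : Fin 3 × Fin 3} {a : Fin 3} :
    cellAtom c a ∈ Spair i j (Equiv.addLeft d) ↔ lineIdx i j c = d := by
  rw [mem_Spair_iff_of_eq_some (α := cellAtom c a) rfl rfl]
  change d + (a + cellOffset c i) = a + cellOffset c j ↔ _
  rw [add_left_comm, add_right_inj, lineIdx, sub_eq_iff_eq_add, eq_comm]

theorem cellAtom_inj {c c' : Fin 3 × Fin 3} {a a' : Fin 3} :
    cellAtom c a = cellAtom c' a' ↔ c = c' ∧ a = a' :=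
  ⟨fun h => Prod.ext_iff.mp (cellAtom_injective (a₁ := (c, a)) (a₂ := (c', a')) h),
    fun ⟨hc, ha⟩ => hc ▸ ha ▸ rfl⟩

variable {w : (Fin 3 → Option (Fin 3)) → ℝ} (hw0 : ∀ α, 0 ≤ w α)
include hw0

theorem cellMass_nonneg (c : Fin 3 × Fin 3) : 0 ≤ cellMass w c :=
  sum_nonneg fun _ _ => hw0 _

theorem sum_cellMass_line_le (i j d : Fin 3) :
    ∑ c with lineIdx i j c = d, cellMass w c ≤ ∑ α ∈ Spair i j (Equiv.addLeft d), w α := by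
  calc ∑ c with lineIdx i j c = d, cellMass w c
      = ∑ ca ∈ univ.filter (fun c => lineIdx i j c = d) ×ˢ univ, w (uncurry cellAtom ca) := by
        rw [sum_product]; rfl
    _ = ∑ α ∈ (univ.filter (fun c => lineIdx i j c = d) ×ˢ univ).image (uncurry cellAtom), w α :=
        (sum_image cellAtom_injective.injOn).symm
    _ ≤ _ := by
        refine sum_le_sum_of_subset_of_nonneg (fun α hα => ?_) fun α _ _ => hw0 α
        obtain ⟨⟨c, a⟩, hc, rfl⟩ := mem_image.mp hα
        exact cellAtom_mem_Spair_addLeft_iff.mpr (mem_filter.mp (mem_product.mp hc).1).2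

theorem cellMass_le_sum_Spair (i j : Fin 3) (c : Fin 3 × Fin 3) :
    cellMass w c ≤ ∑ α ∈ Spair i j (Equiv.addLeft (lineIdx i j c)), w α :=
  (single_le_sum (fun c _ => cellMass_nonneg hw0 c)
    (mem_filter.mpr ⟨mem_univ c, rfl⟩ : c ∈ univ.filter (lineIdx i j · = lineIdx i j c))).trans
    (sum_cellMass_line_le hw0 i j _)

theorem one_sub_le_sum_cellMass (hsum : ∑ α, w α = 1) {ε : ℝ}
    (hbot : ∀ k : Fin 3, ∑ α with α k = none, w α ≤ ε) :
    1 - 3 * ε ≤ ∑ c, cellMass w c := by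
  have hcolored : ∑ c, cellMass w c = ∑ α ∈ univ.image (uncurry cellAtom), w α := by
    rw [sum_image cellAtom_injective.injOn]
    exact (Fintype.sum_prod_type' fun c a => w (cellAtom c a)).symm
  have hcover : ∀ α : Fin 3 → Option (Fin 3), α ∈ univ.image (uncurry cellAtom) ∨
      α ∈ univ.filter (fun α => α 0 = none) ∨ α ∈ univ.filter (fun α => α 1 = none) ∨
      α ∈ univ.filter (fun α => α 2 = none) := fun α => by
    simp only [mem_image, mem_filter, mem_univ, true_and, Prod.exists, uncurry_apply_pair]
    by_contra! h
    obtain ⟨hne, h0, h1, h2⟩ := h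
    obtain ⟨x, hx⟩ := Option.ne_none_iff_exists'.mp h0
    obtain ⟨y, hy⟩ := Option.ne_none_iff_exists'.mp h1
    obtain ⟨z, hz⟩ := Option.ne_none_iff_exists'.mp h2
    refine hne (y - x) (z - x) x (funext fun k => ?_)
    fin_cases k <;> simp [cellAtom, cellOffset, hx, hy, hz]
  have h := sum_univ_le_of_cover hw0 hcover
  rw [hsum, ← hcolored] at h
  linarith [hbot 0, hbot 1, hbot 2]

end Cells

section Torus

set_option synthInstance.maxSize 2000 in
set_option synthInstance.maxHeartbeats 400000 in
/-- `Injective (cellOffset q - cellOffset p)` says that the cells `p` and `q` lie on no common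
line; the second case occurs exactly when the three removed lines are concurrent. -/
theorem torus_cover (l₀₁ l₁₂ l₀₂ : Fin 3) :
    (∃ p q r : Fin 3 × Fin 3, p ≠ q ∧ p ≠ r ∧ q ≠ r ∧
      (∃ i j : Fin 3, i < j ∧ lineIdx i j p = lineIdx i j q) ∧
      (∃ i j : Fin 3, i < j ∧ lineIdx i j p = lineIdx i j r) ∧
      (∃ i j : Fin 3, i < j ∧ lineIdx i j q = lineIdx i j r) ∧
      ∀ c, lineIdx 0 1 c ≠ l₀₁ → lineIdx 1 2 c ≠ l₁₂ → lineIdx 0 2 c ≠ l₀₂ →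
        c = p ∨ c = q ∨ c = r) ∨
    (∃ p q : Fin 3 × Fin 3, Injective (cellOffset q - cellOffset p) ∧
      ∀ c, lineIdx 0 1 c ≠ l₀₁ → lineIdx 1 2 c ≠ l₁₂ → lineIdx 0 2 c ≠ l₀₂ → c = p ∨ c = q) := by
  revert l₀₁ l₁₂ l₀₂
  decide

variable {μ : Fin 3 × Fin 3 → ℝ} (hμ : ∀ c, 0 ≤ μ c)
include hμ

theorem add_le_sum_line {p q : Fin 3 × Fin 3} (hpq : p ≠ q) {i j : Fin 3}
    (h : lineIdx i j p = lineIdx i j q) :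
    μ p + μ q ≤ ∑ c with lineIdx i j c = lineIdx i j p, μ c := by
  rw [← sum_pair hpq]
  exact sum_le_sum_of_subset_of_nonneg (by simp [insert_subset_iff, h]) fun c _ _ => hμ c

theorem torus_mass_dichotomy {C η : ℝ}
    (hline : ∀ i j d, i < j → ∑ c with lineIdx i j c = d, μ c ≤ C)
    (hlight : ∀ i j, i < j → ∃ d, ∑ c with lineIdx i j c = d, μ c ≤ η) :
    2 * (∑ c, μ c - 3 * η) ≤ 3 * C ∨
      ∃ p q, Injective (cellOffset q - cellOffset p) ∧ ∑ c, μ c - 3 * η ≤ μ p + μ q := by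
  obtain ⟨l₀₁, h₀₁⟩ := hlight 0 1 (by decide)
  obtain ⟨l₁₂, h₁₂⟩ := hlight 1 2 (by decide)
  obtain ⟨l₀₂, h₀₂⟩ := hlight 0 2 (by decide)
  set good := univ.filter fun c => lineIdx 0 1 c ≠ l₀₁ ∧ lineIdx 1 2 c ≠ l₁₂ ∧ lineIdx 0 2 c ≠ l₀₂
  have hgood : ∑ c, μ c - 3 * η ≤ ∑ c ∈ good, μ c := by
    have h := sum_univ_le_of_cover hμ (A := good) (B := univ.filter (lineIdx 0 1 · = l₀₁))
      (C := univ.filter (lineIdx 1 2 · = l₁₂)) (D := univ.filter (lineIdx 0 2 · = l₀₂))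
      fun c => by simp only [good, mem_filter, mem_univ, true_and]; tauto
    linarith
  have hsub {s : Finset (Fin 3 × Fin 3)} (hs : ∀ c, lineIdx 0 1 c ≠ l₀₁ → lineIdx 1 2 c ≠ l₁₂ →
      lineIdx 0 2 c ≠ l₀₂ → c ∈ s) : ∑ c ∈ good, μ c ≤ ∑ c ∈ s, μ c :=
    sum_le_sum_of_subset_of_nonneg (fun c hc => hs c (mem_filter.mp hc).2.1 (mem_filter.mp hc).2.2.1
      (mem_filter.mp hc).2.2.2) fun c _ _ => hμ c
  rcases torus_cover l₀₁ l₁₂ l₀₂ with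
    ⟨p, q, r, hpq, hpr, hqr, ⟨i, j, hij, hpq'⟩, ⟨i', j', hij', hpr'⟩, ⟨i'', j'', hij'', hqr'⟩,
      hcov⟩ | ⟨p, q, hinj, hcov⟩
  · left
    have hthree : ∑ c ∈ good, μ c ≤ μ p + μ q + μ r := by
      refine (hsub (s := {p, q, r}) fun c h₁ h₂ h₃ => by simpa using hcov c h₁ h₂ h₃).trans ?_
      rw [sum_insert (by simp [hpq, hpr]), sum_pair hqr, add_assoc]
    linarith [(add_le_sum_line hμ hpq hpq').trans (hline i j _ hij),
      (add_le_sum_line hμ hpr hpr').trans (hline i' j' _ hij'),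
      (add_le_sum_line hμ hqr hqr').trans (hline i'' j'' _ hij'')]
  · right
    refine ⟨p, q, hinj, hgood.trans ?_⟩
    exact (hsub (s := {p, q}) fun c h₁ h₂ h₃ => by simpa using hcov c h₁ h₂ h₃).trans
      (sum_pair (ne_of_injective_cellOffset_sub hinj)).le

end Torus

section TwoCells

def pairCount (i j : Fin 3) (α β : Fin 3 → Option (Fin 3)) : ℕ :=
  #{π | α ∈ Spair i j π ∧ β ∈ Spair i j π}

theorem pairCount_comm (i j : Fin 3) (α β : Fin 3 → Option (Fin 3)) :
    pairCount i j α β = pairCount i j β α := by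
  simp only [pairCount, and_comm]

theorem pairCount_cellAtom (i j : Fin 3) (p q : Fin 3 × Fin 3) (a b : Fin 3) :
    pairCount i j (cellAtom p a) (cellAtom q b) =
      if a + cellOffset p i = b + cellOffset q i then
        (if a + cellOffset p j = b + cellOffset q j then 2 else 0)
      else (if a + cellOffset p j = b + cellOffset q j then 0 else 1) := by
  rw [pairCount, ← card_perm_filter_apply_eq]
  simp only [mem_Spair_iff_of_eq_some (α := cellAtom _ _) rfl rfl]

theorem pairCount_cellAtom_self (i j : Fin 3) (c : Fin 3 × Fin 3) (a b : Fin 3) :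
    pairCount i j (cellAtom c a) (cellAtom c b) = if a = b then 2 else 1 := by
  simp only [pairCount_cellAtom, add_left_inj]
  split_ifs <;> rfl

/-- Atoms of two cells on no common line agree in exactly one coordinate, so exactly one of
the three coordinate pairs sees them in a common `Spair`, and then only for one permutation. -/
theorem sum_pairCount_cellAtom_of_injective {p q : Fin 3 × Fin 3}
    (h : Injective (cellOffset q - cellOffset p)) (a b : Fin 3) :
    pairCount 0 1 (cellAtom p a) (cellAtom q b) + pairCount 1 2 (cellAtom p a) (cellAtom q b) +
      pairCount 0 2 (cellAtom p a) (cellAtom q b) = 1 := by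
  have key : ∀ D : Fin 3 → Fin 3, Injective D → ∀ t,
      ((if D 0 = t then (if D 1 = t then 2 else 0) else (if D 1 = t then 0 else 1)) +
        (if D 1 = t then (if D 2 = t then 2 else 0) else (if D 2 = t then 0 else 1)) +
        (if D 0 = t then (if D 2 = t then 2 else 0) else (if D 2 = t then 0 else 1)) : ℕ) = 1 := by
    decide
  simp only [pairCount_cellAtom, add_cellOffset_eq_iff]
  exact key _ h _

theorem sum_sum_ite_eq_mul {ι : Type*} [Fintype ι] [DecidableEq ι] (f : ι → ℝ) :
    ∑ a, ∑ b, ((if a = b then 2 else 1 : ℕ) : ℝ) * (f a * f b) = (∑ a, f a) ^ 2 + ∑ a, f a ^ 2 := by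
  have h : ∀ a b, ((if a = b then 2 else 1 : ℕ) : ℝ) * (f a * f b) =
      f a * f b + if a = b then f a * f b else 0 := fun a b => by
    split_ifs <;> push_cast <;> ring
  simp only [h, sum_add_distrib, sum_ite_eq, mem_univ, if_true, sq, sum_mul_sum]

theorem sq_le_sq_add_of_add_eq {B R X c : ℝ} (h : B + R = X) (hB : 0 ≤ B) (hR : 0 ≤ R)
    (hX : X ≤ c) : X ^ 2 ≤ B ^ 2 + 2 * c * R := by
  nlinarith

theorem sum_sq_add_sum_sq_le {ι κ : Type*} [Fintype ι] [Nonempty ι] [Fintype κ] [Nonempty κ]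
    {f : ι → ℝ} {g : κ → ℝ} {c : ℝ} (hf : ∀ i, 0 ≤ f i) (hg : ∀ k, 0 ≤ g k)
    (hF : ∑ i, f i ≤ c) (hG : ∑ k, g k ≤ c) (hfg : ∀ i k, f i + g k ≤ c) :
    ∑ i, f i ^ 2 + ∑ k, g k ^ 2 ≤ c ^ 2 := by
  obtain ⟨i₀, hi₀⟩ := Finite.exists_max f
  obtain ⟨k₀, hk₀⟩ := Finite.exists_max g
  have hf₂ : ∑ i, f i ^ 2 ≤ (∑ i, f i) * f i₀ := by
    rw [sum_mul]
    exact sum_le_sum fun i _ => by rw [sq]; exact mul_le_mul_of_nonneg_left (hi₀ i) (hf i)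
  have hg₂ : ∑ k, g k ^ 2 ≤ (∑ k, g k) * g k₀ := by
    rw [sum_mul]
    exact sum_le_sum fun k _ => by rw [sq]; exact mul_le_mul_of_nonneg_left (hk₀ k) (hg k)
  nlinarith [hf i₀, hg k₀, hfg i₀ k₀, mul_le_mul_of_nonneg_right hF (hf i₀),
    mul_le_mul_of_nonneg_right hG (hg k₀)]

theorem two_cell_quadratic_lt {ε γ F G S : ℝ} (hε1 : ε ≤ 0.001) (hγ1 : γ ≤ 0.001)
    (hF : F ≤ 1/2 + γ) (hG : G ≤ 1/2 + γ) (hFG : F + G ≤ 1)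
    (hmass : 1 - 3 * ε - 21 * γ ≤ F + G) (hS : S ≤ (1/2 + γ) ^ 2) :
    3 * F ^ 2 + 3 * G ^ 2 + 2 * F * G + 3 * S + 12 * (1/2 + γ) * (1 - (F + G)) < 3 * (1 - γ) := by
  nlinarith [mul_nonneg (sub_nonneg.2 hF) (sub_nonneg.2 hG),
    mul_nonneg (sub_nonneg.2 hFG) (sub_nonneg.2 hmass), sq_nonneg γ]

variable {w : (Fin 3 → Option (Fin 3)) → ℝ}

def crossMass (w : (Fin 3 → Option (Fin 3)) → ℝ) (i j : Fin 3) (p q : Fin 3 × Fin 3) : ℝ :=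
  ∑ a, ∑ b, (pairCount i j (cellAtom p a) (cellAtom q b) : ℝ) *
    (w (cellAtom p a) * w (cellAtom q b))

theorem crossMass_add_crossMass_add_crossMass {p q : Fin 3 × Fin 3}
    (hpq : Injective (cellOffset q - cellOffset p)) :
    crossMass w 0 1 p q + crossMass w 1 2 p q + crossMass w 0 2 p q =
      cellMass w p * cellMass w q := by
  simp only [crossMass, ← sum_add_distrib, ← add_mul, cellMass, sum_mul_sum]
  refine sum_congr rfl fun a _ => sum_congr rfl fun b _ => ?_
  rw [← Nat.cast_add, ← Nat.cast_add, sum_pairCount_cellAtom_of_injective hpq, Nat.cast_one,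
    one_mul]

theorem sum_sq_preimage_sumElim_cellAtom (i j : Fin 3) {p q : Fin 3 × Fin 3}
    (hφ : Injective (Sum.elim (cellAtom p) (cellAtom q))) :
    ∑ π, (∑ t ∈ (Spair i j π).preimage _ hφ.injOn, w (Sum.elim (cellAtom p) (cellAtom q) t)) ^ 2 =
      cellMass w p ^ 2 + ∑ a, w (cellAtom p a) ^ 2 +
        (cellMass w q ^ 2 + ∑ b, w (cellAtom q b) ^ 2) + 2 * crossMass w i j p q := by
  have hcross : ∑ b, ∑ a, (pairCount i j (cellAtom q b) (cellAtom p a) : ℝ) *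
      (w (cellAtom q b) * w (cellAtom p a)) = ∑ a, ∑ b, (pairCount i j (cellAtom p a)
        (cellAtom q b) : ℝ) * (w (cellAtom p a) * w (cellAtom q b)) := by
    rw [sum_comm]
    simp only [pairCount_comm i j (cellAtom q _), mul_comm (w (cellAtom q _))]
  have hcount : ∀ s t, #{π | s ∈ (Spair i j π).preimage _ hφ.injOn ∧
      t ∈ (Spair i j π).preimage _ hφ.injOn} = pairCount i j (Sum.elim (cellAtom p) (cellAtom q) s)
        (Sum.elim (cellAtom p) (cellAtom q) t) := fun s t => by
    simp only [mem_preimage, pairCount]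
  rw [sum_sq_sum_eq]
  simp only [hcount, Fintype.sum_sum_type, Sum.elim_inl, Sum.elim_inr, pairCount_cellAtom_self,
    sum_add_distrib]
  rw [sum_sum_ite_eq_mul, sum_sum_ite_eq_mul, hcross, cellMass, cellMass, crossMass]
  ring

variable (hw0 : ∀ α, 0 ≤ w α)
include hw0

/-- `4 c = 2 c · 2`: removing `R ≥ 0` from `B + R ≤ c` lowers the square by at most `2 c R`,
and an atom lies in at most two of the sets `Spair i j π`. -/
theorem sum_sq_le_sum_sq_preimage_add {κ : Type*} [Fintype κ] {φ : κ → Fin 3 → Option (Fin 3)}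
    (hφ : Injective φ) (hsum : ∑ α, w α = 1) {c : ℝ} {i j : Fin 3}
    (hle : ∀ π, ∑ α ∈ Spair i j π, w α ≤ c) :
    ∑ π, (∑ α ∈ Spair i j π, w α) ^ 2 ≤
      ∑ π, (∑ t ∈ (Spair i j π).preimage φ hφ.injOn, w (φ t)) ^ 2 +
        4 * c * (1 - ∑ t, w (φ t)) := by
  classical
  set R : Equiv.Perm (Fin 3) → ℝ := fun π => ∑ α ∈ Spair i j π with α ∉ Set.range φ, w α
  have hsplit : ∀ π, ∑ t ∈ (Spair i j π).preimage φ hφ.injOn, w (φ t) + R π =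
      ∑ α ∈ Spair i j π, w α := fun π => by
    rw [sum_preimage', sum_filter_add_sum_filter_not]
  have hR : ∑ π, R π ≤ 2 * (1 - ∑ t, w (φ t)) := by
    have hout : ∑ α with α ∉ Set.range φ, w α = 1 - ∑ t, w (φ t) := by
      rw [← hsum, ← sum_filter_add_sum_filter_not univ (· ∈ Set.range φ) w,
        ← sum_preimage' φ univ hφ.injOn, preimage_univ, add_sub_cancel_left]
    have hcount : ∀ α, #{π | α ∈ (Spair i j π).filter (· ∉ Set.range φ)} ≤ 2 := fun α =>
      (card_le_card fun π hπ => mem_filter.mpr ⟨mem_univ π, (mem_filter.mp (mem_filter.mp hπ).2).1⟩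
        ).trans (card_filter_mem_Spair_le_two i j α)
    have h := sum_sum_le_mul_sum_of_card_le
      (fun π => (Spair i j π).filter (· ∉ Set.range φ)) (s := univ.filter (· ∉ Set.range φ))
      (fun _ => filter_subset_filter _ (subset_univ _)) (fun α _ => hw0 α) fun α _ => hcount α
    rwa [hout, Nat.cast_ofNat] at h
  have hc : 0 ≤ c := (sum_nonneg fun α _ => hw0 α).trans (hle 1)
  calc ∑ π, (∑ α ∈ Spair i j π, w α) ^ 2
      ≤ ∑ π, ((∑ t ∈ (Spair i j π).preimage φ hφ.injOn, w (φ t)) ^ 2 + 2 * c * R π) :=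
        sum_le_sum fun π _ => sq_le_sq_add_of_add_eq (hsplit π) (sum_nonneg fun _ _ => hw0 _)
          (sum_nonneg fun _ _ => hw0 _) (hle π)
    _ ≤ _ := by
        rw [sum_add_distrib, ← mul_sum]
        nlinarith

theorem add_le_of_injective_cellOffset_sub {C : ℝ}
    (hcolor : ∀ k σ : Fin 3, ∑ α with α k = some σ, w α ≤ C) {p q : Fin 3 × Fin 3}
    (h : Injective (cellOffset q - cellOffset p)) (a b : Fin 3) :
    w (cellAtom p a) + w (cellAtom q b) ≤ C := by
  obtain ⟨k, hk⟩ := Finite.injective_iff_surjective.mp h (a - b)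
  have hne : cellAtom p a ≠ cellAtom q b := fun h' =>
    ne_of_injective_cellOffset_sub h (cellAtom_inj.mp h').1
  refine le_trans ?_ (hcolor k (a + cellOffset p k))
  rw [← sum_pair hne]
  refine sum_le_sum_of_subset_of_nonneg ?_ fun α _ _ => hw0 α
  simp only [insert_subset_iff, singleton_subset_iff, mem_filter, mem_univ, true_and]
  exact ⟨rfl, congrArg some (add_cellOffset_eq_iff.mpr hk).symm⟩

theorem false_of_injective_cellOffset_sub (hsum : ∑ α, w α = 1) {ε γ : ℝ} (hε1 : ε ≤ 0.001)
    (hγ1 : γ ≤ 0.001)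
    (hcolor : ∀ k σ : Fin 3, ∑ α with α k = some σ, w α ≤ 1/2 + γ)
    (hle : ∀ i j : Fin 3, i < j → ∀ π, ∑ α ∈ Spair i j π, w α ≤ 1/2 + γ)
    (hpair : ∀ i j : Fin 3, i < j → 1 - γ ≤ ∑ π, (∑ α ∈ Spair i j π, w α) ^ 2)
    {p q : Fin 3 × Fin 3} (hpq : Injective (cellOffset q - cellOffset p))
    (hmass : 1 - 3 * ε - 21 * γ ≤ cellMass w p + cellMass w q) : False := by
  have hne := ne_of_injective_cellOffset_sub hpq
  have hφ : Injective (Sum.elim (cellAtom p) (cellAtom q)) :=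
    Injective.sumElim (fun _ _ h => (cellAtom_inj.mp h).2) (fun _ _ h => (cellAtom_inj.mp h).2)
      fun _ _ h => hne (cellAtom_inj.mp h).1
  have hmassφ : ∑ t, w (Sum.elim (cellAtom p) (cellAtom q) t) = cellMass w p + cellMass w q :=
    Fintype.sum_sum_type _
  have hcell : ∀ c, cellMass w c ≤ 1/2 + γ := fun c =>
    (cellMass_le_sum_Spair hw0 0 1 c).trans (hle 0 1 (by decide) _)
  have htotal : cellMass w p + cellMass w q ≤ 1 := by
    rw [← hmassφ, ← hsum, ← sum_image hφ.injOn]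
    exact sum_le_sum_of_subset_of_nonneg (subset_univ _) fun α _ _ => hw0 α
  have hsq := sum_sq_add_sum_sq_le (fun _ => hw0 _) (fun _ => hw0 _) (hcell p) (hcell q)
    (add_le_of_injective_cellOffset_sub hw0 hcolor hpq)
  have hpair' : ∀ i j : Fin 3, i < j → 1 - γ ≤ cellMass w p ^ 2 + ∑ a, w (cellAtom p a) ^ 2 +
      (cellMass w q ^ 2 + ∑ b, w (cellAtom q b) ^ 2) + 2 * crossMass w i j p q +
      4 * (1/2 + γ) * (1 - (cellMass w p + cellMass w q)) := fun i j hij => by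
    have h := (hpair i j hij).trans (sum_sq_le_sum_sq_preimage_add hw0 hφ hsum (hle i j hij))
    rwa [sum_sq_preimage_sumElim_cellAtom i j hφ, hmassφ] at h
  have hlt := two_cell_quadratic_lt hε1 hγ1 (hcell p) (hcell q) htotal hmass hsq
  linarith [hpair' 0 1 (by decide), hpair' 1 2 (by decide), hpair' 0 2 (by decide),
    crossMass_add_crossMass_add_crossMass (w := w) hpq]

end TwoCells

end TwentySeven

open TwentySeven

theorem twentyseven_variable_lemma_general
    (ε γ : ℝ) (hε1 : ε ≤ 0.001) (hγ0 : 0 ≤ γ) (hγ1 : γ ≤ 0.001)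
    (w : (Fin 3 → Option (Fin 3)) → ℝ)
    (hw0 : ∀ α, 0 ≤ w α)
    (hsum : ∑ α : Fin 3 → Option (Fin 3), w α = 1)
    (hcolor : ∀ k : Fin 3, ∀ σ : Fin 3,
      ∑ α ∈ Finset.univ.filter (fun α : Fin 3 → Option (Fin 3) => α k = some σ), w α
        ≤ 1/2 + γ)
    (hbot : ∀ k : Fin 3,
      ∑ α ∈ Finset.univ.filter (fun α : Fin 3 → Option (Fin 3) => α k = none), w α ≤ ε)
    (hpair : ∀ i j : Fin 3, i < j →
      1 - γ ≤ ∑ π : Equiv.Perm (Fin 3), (∑ α ∈ Spair i j π, w α)^2) :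
    ∃ i j : Fin 3, i < j ∧ ∃ π : Equiv.Perm (Fin 3),
      1/2 + γ ≤ ∑ α ∈ Spair i j π, w α := by
  by_contra! hcon
  have hle : ∀ i j : Fin 3, i < j → ∀ π, ∑ α ∈ Spair i j π, w α ≤ 1/2 + γ :=
    fun i j hij π => (hcon i j hij π).le
  have hline : ∀ i j d : Fin 3, i < j → ∑ c with lineIdx i j c = d, cellMass w c ≤ 1/2 + γ :=
    fun i j d hij => (sum_cellMass_line_le hw0 i j d).trans (hle i j hij _)
  have hlight : ∀ i j : Fin 3, i < j → ∃ d, ∑ c with lineIdx i j c = d, cellMass w c ≤ 7 * γ :=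
    fun i j hij => by
      obtain ⟨d, hd⟩ := exists_light_shift hw0 hsum hγ0 hγ1 (hle i j hij) (hpair i j hij)
      exact ⟨d, (sum_cellMass_line_le hw0 i j d).trans hd⟩
  have htotal := one_sub_le_sum_cellMass hw0 hsum hbot
  rcases torus_mass_dichotomy (cellMass_nonneg hw0) hline hlight with h | ⟨p, q, hpq, hmass⟩
  · linarith
  · exact false_of_injective_cellOffset_sub hw0 hsum hε1 hγ1 hcolor hle hpair hpq (by linarith)

theorem twentyseven_variable_lemma
    (ε γ : ℝ) (hε0 : 0 ≤ ε) (hε1 : ε ≤ 0.001) (hγ0 : 0 ≤ γ) (hγ1 : γ ≤ 0.001)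
    (w : (Fin 3 → Option (Fin 3)) → ℝ)
    (hw0 : ∀ α, 0 ≤ w α) (hw1 : ∀ α, w α ≤ 1)
    (hsum : ∑ α : Fin 3 → Option (Fin 3), w α = 1)
    (hcolor : ∀ k : Fin 3, ∀ σ : Fin 3,
      ∑ α ∈ Finset.univ.filter (fun α : Fin 3 → Option (Fin 3) => α k = some σ), w α
        ≤ 1/2 + γ)
    (hbot : ∀ k : Fin 3,
      ∑ α ∈ Finset.univ.filter (fun α : Fin 3 → Option (Fin 3) => α k = none), w α ≤ ε)
    (hpair : ∀ i j : Fin 3, i < j →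
      1 - γ ≤ ∑ π : Equiv.Perm (Fin 3), (∑ α ∈ Spair i j π, w α)^2) :
    ∃ i j : Fin 3, i < j ∧ ∃ π : Equiv.Perm (Fin 3),
      1/2 + γ ≤ ∑ α ∈ Spair i j π, w α :=
  twentyseven_variable_lemma_general ε γ hε1 hγ0 hγ1 w hw0 hsum hcolor hbot hpair
end

section
/- Let V be a finite nonempty set, let γ ∈ (0, 1/2], and let p : V → ({1,2,3} → ℝ) assign to each u ∈ V nonnegative reals p_u(1), p_u(2), p_u(3) with p_u(1) + p_u(2) + p_u(3) ≤ 1. Suppose the average collision probability satisfies (1/|V|)·∑_{u ∈ V} (p_u(1)² + p_u(2)² + p_u(3)²) ≥ 1/2 + γ. Then there exists σ ∈ {1,2,3} such that |{u ∈ V : p_u(σ) ≥ 1/2 + γ/2}| ≥ (γ/3)·|V|. -/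
open Finset

theorem large_collision_probability_rounding
    {V : Type*} [Fintype V] [DecidableEq V] [Nonempty V]
    (γ : ℝ) (hγ0 : 0 < γ) (hγ1 : γ ≤ 1/2)
    (p : V → Fin 3 → ℝ)
    (hp0 : ∀ u σ, 0 ≤ p u σ)
    (hp1 : ∀ u, p u 0 + p u 1 + p u 2 ≤ 1)
    (havg : 1/2 + γ ≤
      (∑ u : V, ((p u 0)^2 + (p u 1)^2 + (p u 2)^2)) / (Fintype.card V : ℝ)) :
    ∃ σ : Fin 3,
      (γ/3) * (Fintype.card V : ℝ) ≤
        ((Finset.univ.filter (fun u : V => 1/2 + γ/2 ≤ p u σ)).card : ℝ) := by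
  by_contra hcon
  push_neg at hcon
  set n : ℝ := (Fintype.card V : ℝ) with hn
  have hnpos : (0 : ℝ) < n := by
    have h := Fintype.card_pos (α := V)
    rw [hn]; exact_mod_cast h
  set c : ℝ := 1/2 + γ/2 with hc
  have hcpos : 0 < c := by rw [hc]; linarith
  set coll : V → ℝ := fun u => (p u 0)^2 + (p u 1)^2 + (p u 2)^2 with hcoll
  -- collision probability is at most 1
  have hcoll1 : ∀ u, coll u ≤ 1 := by
    intro u
    have h0 := hp0 u 0; have h1 := hp0 u 1; have h2 := hp0 u 2
    have hs := hp1 u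
    simp only [hcoll]
    nlinarith [mul_nonneg h0 h1, mul_nonneg h1 h2, mul_nonneg h0 h2]
  -- high collision probability forces a large coordinate
  have hkey : ∀ u, c ≤ coll u → ∃ σ : Fin 3, c ≤ p u σ := by
    intro u hcu
    by_contra hno
    push_neg at hno
    have h0 := hp0 u 0; have h1 := hp0 u 1; have h2 := hp0 u 2
    have hs := hp1 u
    have k0 : p u 0 < c := hno 0
    have k1 : p u 1 < c := hno 1
    have k2 : p u 2 < c := hno 2
    simp only [hcoll] at hcu
    have t0 : 0 ≤ (c - p u 0) * p u 0 := mul_nonneg (by linarith) h0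
    have t1 : 0 ≤ (c - p u 1) * p u 1 := mul_nonneg (by linarith) h1
    have t2 : 0 ≤ (c - p u 2) * p u 2 := mul_nonneg (by linarith) h2
    have hid : (p u 0)^2 + (p u 1)^2 + (p u 2)^2
        = c * (p u 0 + p u 1 + p u 2)
          - ((c - p u 0) * p u 0 + (c - p u 1) * p u 1 + (c - p u 2) * p u 2) := by ring
    have hcs : c * (p u 0 + p u 1 + p u 2) ≤ c * 1 :=
      mul_le_mul_of_nonneg_left hs hcpos.le
    have hT : (c - p u 0) * p u 0 + (c - p u 1) * p u 1 + (c - p u 2) * p u 2 ≤ 0 := by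
      linarith [hid ▸ hcu]
    have e0 : (c - p u 0) * p u 0 = 0 := le_antisymm (by linarith) t0
    have e1 : (c - p u 1) * p u 1 = 0 := le_antisymm (by linarith) t1
    have e2 : (c - p u 2) * p u 2 = 0 := le_antisymm (by linarith) t2
    have z0 : p u 0 = 0 := by
      rcases mul_eq_zero.1 e0 with h | h
      · linarith
      · exact h
    have z1 : p u 1 = 0 := by
      rcases mul_eq_zero.1 e1 with h | h
      · linarith
      · exact h
    have z2 : p u 2 = 0 := by
      rcases mul_eq_zero.1 e2 with h | h
      · linarith
      · exact h
    rw [z0, z1, z2] at hcu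
    nlinarith
  classical
  set G : Finset V := univ.filter (fun u => c ≤ coll u) with hG
  set G0 : Finset V := univ.filter (fun u => c ≤ p u 0) with hG0
  set G1 : Finset V := univ.filter (fun u => c ≤ p u 1) with hG1
  set G2 : Finset V := univ.filter (fun u => c ≤ p u 2) with hG2
  have hGsub : G ⊆ G0 ∪ G1 ∪ G2 := by
    intro u hu
    rw [hG, mem_filter] at hu
    obtain ⟨σ, hσ⟩ := hkey u hu.2
    fin_cases σ <;> simp_all [hG0, hG1, hG2, Finset.mem_union, Finset.mem_filter]
  have hGcard : (G.card : ℝ) ≤ (G0.card : ℝ) + (G1.card : ℝ) + (G2.card : ℝ) := by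
    have := (Finset.card_le_card hGsub).trans
      ((Finset.card_union_le _ _).trans (Nat.add_le_add_right (Finset.card_union_le _ _) _))
    exact_mod_cast this
  -- each Gσ is small by assumption
  have hsmall : (G.card : ℝ) < γ * n := by
    have e0 := hcon 0; have e1 := hcon 1; have e2 := hcon 2
    simp only [hG0, hG1, hG2] at hGcard
    calc (G.card : ℝ) ≤ _ := hGcard
      _ < γ/3 * n + γ/3 * n + γ/3 * n := add_lt_add (add_lt_add e0 e1) e2
      _ = γ * n := by ring
  -- lower bound on the total collision probability
  rw [le_div_iff₀ hnpos] at havg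
  -- upper bound on the total collision probability
  set B : Finset V := univ.filter (fun u => ¬ c ≤ coll u) with hB
  have hcardsplit : (G.card : ℝ) + (B.card : ℝ) = n := by
    have h := Finset.card_filter_add_card_filter_not
      (s := (univ : Finset V)) (p := fun u => c ≤ coll u)
    have h2 : G.card + B.card = Fintype.card V := by
      rw [hG, hB, ← Finset.card_univ]
      simpa using h
    rw [hn]; exact_mod_cast h2
  have hsplit : ∑ u ∈ G, coll u + ∑ u ∈ B, coll u = ∑ u : V, coll u := by
    rw [hG, hB]
    exact Finset.sum_filter_add_sum_filter_not univ (fun u => c ≤ coll u) coll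
  have hup1 : ∑ u ∈ G, coll u ≤ (G.card : ℝ) := by
    calc ∑ u ∈ G, coll u ≤ ∑ u ∈ G, (1 : ℝ) := Finset.sum_le_sum (fun u _ => hcoll1 u)
      _ = (G.card : ℝ) := by simp
  have hup2 : ∑ u ∈ B, coll u ≤ (B.card : ℝ) * c := by
    calc ∑ u ∈ B, coll u ≤ ∑ u ∈ B, c := by
          apply Finset.sum_le_sum
          intro u hu
          rw [hB, Finset.mem_filter] at hu
          exact (not_le.1 hu.2).le
      _ = (B.card : ℝ) * c := by rw [Finset.sum_const, nsmul_eq_mul]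
  set g : ℝ := (G.card : ℝ) with hg
  have hbig : (1/2 + γ) * n ≤ g + (n - g) * c := by
    have hBc : (B.card : ℝ) = n - g := by rw [hg]; linarith
    rw [hBc] at hup2
    have havg' : (1/2 + γ) * n ≤ ∑ u : V, coll u := havg
    clear_value n c coll G B g
    linarith [hsplit, hup1, hup2, havg']
  rw [hc] at hbig
  -- from hbig : n*γ/2 ≤ g*(1-γ)/2 ; from hsmall : g < γ*n
  have h1 : g * (1 - γ) < γ * n * (1 - γ) :=
    mul_lt_mul_of_pos_right hsmall (by linarith)
  nlinarith [mul_pos (mul_pos hγ0 hγ0) hnpos, h1, hbig]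
end

section
/- There exists a universal constant c > 0 such that for every n ≥ 1 and every Boolean function f : {0,1}ⁿ → {0,1}, writing μ = 2^{−n}·∑_{x ∈ {0,1}ⁿ} f(x) and sens_f(x) = |{i ∈ {1,…,n} : f(x ⊕ eᵢ) ≠ f(x)}|, one has 2^{−n}·∑_{x ∈ {0,1}ⁿ} √(sens_f(x)) ≥ c·μ·(1 − μ). -/
/-!
Induction on the dimension, in the manner of Bobkov's two-point inequality, proves the bound
with `c = 1`. Split the cube along the first coordinate into halves of densities `m₀, m₁` and put
`t = |m₀ - m₁|`. At a point whose first coordinate is sensitive, Cauchy–Schwarz with the weights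
`(1 - t², t)` (admissible because `(1 - t²)² + t² ≤ 1`) gives
`√(s + 1) ≥ (1 - t²) √s + t`, where `s` is the sensitivity inside the half. The first coordinate is
sensitive on at least a `t`-fraction of the points, so the boundary of `f` is at least
`(1 - t²)` times the average boundary of the halves plus `t²`. Since `m(1 - m) ≤ 1/4`, this
dominates the variance `((m₀ + m₁)/2)(1 - (m₀ + m₁)/2) = (m₀(1 - m₀) + m₁(1 - m₁))/2 + t²/4`.
-/

open Finset
open scoped BigOperators

theorem Fintype.expect_pi_fin_succ {α M : Type*} [Fintype α] [AddCommMonoid M] [Module ℚ≥0 M]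
    {n : ℕ} (g : (Fin (n + 1) → α) → M) :
    𝔼 y, g y = 𝔼 a, 𝔼 x, g (Fin.cons a x) := by
  rw [← Fintype.expect_equiv (Fin.consEquiv fun _ ↦ α) (fun p ↦ g (Fin.cons p.1 p.2)) g
    fun _ ↦ rfl]
  exact Finset.expect_product' univ univ fun a x ↦ g (Fin.cons a x)

theorem Fintype.expect_bool {K : Type*} [Semifield K] [CharZero K] (h : Bool → K) :
    𝔼 b, h b = (h false + h true) / 2 := by
  rw [Fintype.expect_eq_sum_div_card, Fintype.sum_bool, Fintype.card_bool, add_comm]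
  norm_num

theorem mul_sqrt_add_mul_sqrt_le_sqrt_add {a b s d : ℝ} (hs : 0 ≤ s) (hd : 0 ≤ d)
    (hab : a ^ 2 + b ^ 2 ≤ 1) : a * √s + b * √d ≤ √(s + d) := by
  apply Real.le_sqrt_of_sq_le
  nlinarith [Real.sq_sqrt hs, Real.sq_sqrt hd, sq_nonneg (b * √s - a * √d),
    mul_nonneg (sub_nonneg.2 hab) (add_nonneg hs hd)]

theorem midpoint_mul_one_sub_le {m₀ m₁ e₀ e₁ : ℝ} (h₀ : m₀ ∈ Set.Icc (0 : ℝ) 1)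
    (h₁ : m₁ ∈ Set.Icc (0 : ℝ) 1) (he₀ : m₀ * (1 - m₀) ≤ e₀) (he₁ : m₁ * (1 - m₁) ≤ e₁) :
    (m₀ + m₁) / 2 * (1 - (m₀ + m₁) / 2) ≤
      (1 - (m₀ - m₁) ^ 2) * ((e₀ + e₁) / 2) + (m₀ - m₁) ^ 2 := by
  obtain ⟨h₀, h₀'⟩ := h₀
  obtain ⟨h₁, h₁'⟩ := h₁
  have hd : (m₀ - m₁) ^ 2 ≤ 1 := by nlinarith
  nlinarith [mul_le_mul_of_nonneg_left (add_le_add he₀ he₁) (sub_nonneg.2 hd),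
    sq_nonneg (2 * m₀ - 1), sq_nonneg (2 * m₁ - 1), sq_nonneg (m₀ - m₁)]

namespace BooleanFunction

variable {n : ℕ}

def sensitivity (f : (Fin n → Bool) → Bool) (x : Fin n → Bool) : ℕ :=
  #{i | f (Function.update x i (!x i)) ≠ f x}

noncomputable def density (f : (Fin n → Bool) → Bool) : ℝ :=
  𝔼 x, if f x then 1 else 0

noncomputable def talagrandBoundary (f : (Fin n → Bool) → Bool) : ℝ :=
  𝔼 x, √(sensitivity f x)

def slice (f : (Fin (n + 1) → Bool) → Bool) (b : Bool) (x : Fin n → Bool) : Bool :=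
  f (Fin.cons b x)

theorem density_nonneg (f : (Fin n → Bool) → Bool) : 0 ≤ density f :=
  expect_nonneg fun _ _ ↦ by split_ifs <;> norm_num

theorem density_le_one (f : (Fin n → Bool) → Bool) : density f ≤ 1 :=
  expect_le univ_nonempty fun _ _ ↦ by split_ifs <;> norm_num

theorem talagrandBoundary_nonneg (f : (Fin n → Bool) → Bool) : 0 ≤ talagrandBoundary f :=
  expect_nonneg fun _ _ ↦ Real.sqrt_nonneg _

theorem density_fin_zero_eq_zero_or_one (f : (Fin 0 → Bool) → Bool) :
    density f = 0 ∨ density f = 1 := by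
  unfold density
  rw [Fintype.expect_eq_sum_div_card, Fintype.sum_unique]
  split_ifs <;> simp

theorem density_eq_average_slice (f : (Fin (n + 1) → Bool) → Bool) :
    density f = (density (slice f false) + density (slice f true)) / 2 := by
  rw [density, Fintype.expect_pi_fin_succ, Fintype.expect_bool]
  rfl

theorem talagrandBoundary_eq_average (f : (Fin (n + 1) → Bool) → Bool) :
    talagrandBoundary f =
      (𝔼 x, √(sensitivity f (Fin.cons false x)) +
        𝔼 x, √(sensitivity f (Fin.cons true x))) / 2 := by
  rw [talagrandBoundary, Fintype.expect_pi_fin_succ, Fintype.expect_bool]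

theorem sensitivity_cons (f : (Fin (n + 1) → Bool) → Bool) (b : Bool) (x : Fin n → Bool) :
    sensitivity f (Fin.cons b x) =
      sensitivity (slice f b) x + if slice f false x = slice f true x then 0 else 1 := by
  rw [sensitivity, Fin.card_filter_univ_succ', add_comm]
  congr 1
  · simp only [sensitivity, slice, Fin.cons_succ, ← Fin.cons_update]
    rfl
  · cases b <;> simp only [slice, Fin.cons_zero, Fin.update_cons_zero, Bool.not_false,
      Bool.not_true, ne_eq, eq_comm, ite_not] <;> rfl

theorem abs_density_slice_sub_le (f : (Fin (n + 1) → Bool) → Bool) :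
    |density (slice f false) - density (slice f true)| ≤
      𝔼 x, if slice f false x = slice f true x then (0 : ℝ) else 1 := by
  rw [density, density, ← expect_sub_distrib]
  refine (abs_expect_le _ _).trans (expect_le_expect fun x _ ↦ ?_)
  cases slice f false x <;> cases slice f true x <;> norm_num

theorem sqrt_sensitivity_slice_le (f : (Fin (n + 1) → Bool) → Bool) (b : Bool)
    (x : Fin n → Bool) {t : ℝ} (ht₀ : 0 ≤ t) (ht₁ : t ≤ 1) :
    (1 - t ^ 2) * √(sensitivity (slice f b) x) +
        t * (if slice f false x = slice f true x then 0 else 1) ≤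
      √(sensitivity f (Fin.cons b x)) := by
  have hab : (1 - t ^ 2) ^ 2 + t ^ 2 ≤ 1 := by
    nlinarith [mul_nonneg (sq_nonneg t) (sub_nonneg.2 (pow_le_one₀ ht₀ ht₁ : t ^ 2 ≤ 1))]
  have h := mul_sqrt_add_mul_sqrt_le_sqrt_add (Nat.cast_nonneg (sensitivity (slice f b) x))
    (by positivity : (0 : ℝ) ≤ if slice f false x = slice f true x then 0 else 1) hab
  rw [sensitivity_cons]
  split_ifs at h ⊢ <;> simpa using h

theorem talagrandBoundary_slice_le (f : (Fin (n + 1) → Bool) → Bool) {t : ℝ} (ht₀ : 0 ≤ t)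
    (ht₁ : t ≤ 1) :
    (1 - t ^ 2) * ((talagrandBoundary (slice f false) + talagrandBoundary (slice f true)) / 2) +
        t * 𝔼 x, (if slice f false x = slice f true x then 0 else 1 : ℝ) ≤
      talagrandBoundary f := by
  have hslice (b : Bool) : (1 - t ^ 2) * talagrandBoundary (slice f b) +
      t * 𝔼 x, (if slice f false x = slice f true x then 0 else 1 : ℝ) ≤
        𝔼 x, √(sensitivity f (Fin.cons b x)) := by
    rw [talagrandBoundary, mul_expect, mul_expect, ← expect_add_distrib]
    exact expect_le_expect fun x _ ↦ sqrt_sensitivity_slice_le f b x ht₀ ht₁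
  rw [talagrandBoundary_eq_average]
  linarith [hslice false, hslice true]

theorem density_mul_one_sub_le_talagrandBoundary :
    ∀ {n : ℕ} (f : (Fin n → Bool) → Bool), density f * (1 - density f) ≤ talagrandBoundary f
  | 0, f => by
    rcases density_fin_zero_eq_zero_or_one f with h | h <;> simp [h, talagrandBoundary_nonneg]
  | n + 1, f => by
    set m₀ := density (slice f false)
    set m₁ := density (slice f true)
    have ht₁ : |m₀ - m₁| ≤ 1 := by
      simpa using abs_sub_le_of_le_of_le (density_nonneg _) (density_le_one _)
        (density_nonneg _) (density_le_one _)
    calc density f * (1 - density f) = (m₀ + m₁) / 2 * (1 - (m₀ + m₁) / 2) := by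
          rw [density_eq_average_slice]
      _ ≤ (1 - |m₀ - m₁| ^ 2) *
            ((talagrandBoundary (slice f false) + talagrandBoundary (slice f true)) / 2) +
            |m₀ - m₁| * |m₀ - m₁| := by
          rw [← sq, sq_abs]
          exact midpoint_mul_one_sub_le ⟨density_nonneg _, density_le_one _⟩
            ⟨density_nonneg _, density_le_one _⟩ (density_mul_one_sub_le_talagrandBoundary _)
            (density_mul_one_sub_le_talagrandBoundary _)
      _ ≤ (1 - |m₀ - m₁| ^ 2) *
            ((talagrandBoundary (slice f false) + talagrandBoundary (slice f true)) / 2) +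
            |m₀ - m₁| * 𝔼 x, (if slice f false x = slice f true x then 0 else 1 : ℝ) := by
          gcongr
          exact abs_density_slice_sub_le f
      _ ≤ talagrandBoundary f := talagrandBoundary_slice_le f (abs_nonneg _) ht₁

end BooleanFunction

theorem talagrand_boundary_lower_bound :
    ∃ c : ℝ, 0 < c ∧
      ∀ n : ℕ, 1 ≤ n → ∀ f : (Fin n → Bool) → Bool,
        ∀ μ : ℝ,
          μ = (∑ x : Fin n → Bool, if f x then (1 : ℝ) else 0) / 2^n →
          c * μ * (1 - μ) ≤
            (∑ x : Fin n → Bool,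
              Real.sqrt ((Finset.univ.filter
                (fun i : Fin n => f (Function.update x i (!x i)) ≠ f x)).card)) / 2^n := by
  refine ⟨1, one_pos, fun n _ f μ hμ ↦ ?_⟩
  have hcard : (Fintype.card (Fin n → Bool) : ℝ) = 2 ^ n := by simp
  have h := BooleanFunction.density_mul_one_sub_le_talagrandBoundary f
  rw [BooleanFunction.density, BooleanFunction.talagrandBoundary,
    Fintype.expect_eq_sum_div_card, Fintype.expect_eq_sum_div_card, hcard, ← hμ] at h
  simpa only [one_mul, BooleanFunction.sensitivity] using h
end

section
/- There exists a universal constant c > 0 such that for every n ≥ 1 and every subset S ⊆ {0,1}ⁿ, the outer vertex boundary N(S) = {y ∉ S : ∃ x ∈ S with Hamming distance dist(x,y) = 1} satisfies |N(S)| ≥ (c/√n)·|S|·(1 − |S|/2ⁿ). -/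
/-!
Split the cube along the first coordinate into two halves `S₀, S₁ ⊆ {0,1}ⁿ` and write
`N = 2ⁿ`, `B = |∂S|`. Every boundary point of a half `Sᵢ` inside its subcube lies in `∂S`, and
so does every point of `S₁ \ S₀` or `S₀ \ S₁` moved across the cut; hence by induction
`|S₀|(N - |S₀|) + |S₁|(N - |S₁|) ≤ √n N B` and `||S₀| - |S₁|| ≤ B`. An elementary quadratic
inequality turns these two facts into `|S|(2N - |S|) ≤ √(n+1) 2N B`, so that
`|S|(2ⁿ - |S|) ≤ √n 2ⁿ |∂S|` for all `n`, which is the theorem with `c = 1`.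
-/

open Finset

theorem mul_two_mul_sub_le_of_halves {N s₀ s₁ β a b : ℝ} (hb : 0 ≤ b)
    (hab : a ^ 2 + 1 ≤ b ^ 2) (hs₀ : 0 ≤ s₀) (hs₀N : s₀ ≤ N) (hs₁ : 0 ≤ s₁) (hs₁N : s₁ ≤ N)
    (hhalves : s₀ * (N - s₀) + s₁ * (N - s₁) ≤ a * N * β) (hdiff : |s₀ - s₁| ≤ β) :
    (s₀ + s₁) * (2 * N - (s₀ + s₁)) ≤ b * (2 * N) * β := by
  set m := (s₀ + s₁) * (2 * N - (s₀ + s₁))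
  have hβ : 0 ≤ β := (abs_nonneg _).trans hdiff
  have ht : 0 ≤ N * β := mul_nonneg (hs₀.trans hs₀N) hβ
  have hm : 0 ≤ m := mul_nonneg (by linarith) (by linarith)
  have hmN : m ≤ N ^ 2 := by nlinarith [sq_nonneg (N - (s₀ + s₁))]
  have hd : (s₀ - s₁) ^ 2 ≤ β ^ 2 := sq_le_sq' (abs_le.mp hdiff).1 (abs_le.mp hdiff).2
  have hmd : m ≤ (s₀ - s₁) ^ 2 + 2 * a * (N * β) := by nlinarith
  -- `m ≤ N²` and `(s₀ - s₁)² ≤ β²` bound `m (s₀ - s₁)²` by `(N β)²`; solving the resulting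
  -- quadratic inequality in `m` gives `m ≤ (a + b) N β`
  have hquad : m ^ 2 ≤ (N * β) ^ 2 + 2 * a * (N * β) * m := by
    nlinarith [mul_le_mul hmN hd (sq_nonneg _) (sq_nonneg N), mul_le_mul_of_nonneg_left hmd hm]
  have hab' : a ≤ b := le_of_sq_le_sq (by linarith) hb
  have hroot : m - a * (N * β) ≤ b * (N * β) :=
    le_of_sq_le_sq (by nlinarith [mul_le_mul_of_nonneg_right hab (sq_nonneg (N * β))])
      (mul_nonneg hb ht)
  nlinarith [mul_le_mul_of_nonneg_right hab' ht]

namespace Hypercube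

variable {n : ℕ}

def boundary (S : Finset (Fin n → Bool)) : Finset (Fin n → Bool) :=
  univ.filter fun y => y ∉ S ∧ ∃ x ∈ S, hammingDist x y = 1

def slice (b : Bool) (S : Finset (Fin (n + 1) → Bool)) : Finset (Fin n → Bool) :=
  univ.filter fun x => Fin.cons b x ∈ S

@[simp]
theorem mem_slice {b : Bool} {S : Finset (Fin (n + 1) → Bool)} {x : Fin n → Bool} :
    x ∈ slice b S ↔ Fin.cons b x ∈ S := by
  simp [slice]

theorem hammingDist_cons (a b : Bool) (x y : Fin n → Bool) :
    hammingDist (Fin.cons a x : Fin (n + 1) → Bool) (Fin.cons b y) =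
      (if a = b then 0 else 1) + hammingDist x y := by
  simp only [hammingDist, card_filter, Fin.sum_univ_succ, Fin.cons_zero, Fin.cons_succ, ne_eq,
    ite_not]

theorem card_slice_false_add_card_slice_true (S : Finset (Fin (n + 1) → Bool)) :
    #(slice false S) + #(slice true S) = #S := by
  have hfiber (b : Bool) : #(slice b S) = #(S.filter fun y => y 0 = b) :=
    card_nbij' (fun x => Fin.cons b x) Fin.tail (fun x hx => by simp_all)
      (fun y hy => by
        obtain ⟨hyS, rfl⟩ := mem_filter.mp hy
        simpa using hyS)
      (fun x _ => Fin.tail_cons _ _)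
      (fun y hy => by
        obtain ⟨-, rfl⟩ := mem_filter.mp hy
        exact Fin.cons_self_tail y)
  rw [card_eq_sum_card_fiberwise (s := S) (t := univ) (f := fun y => y 0)
    (fun _ _ => mem_univ _), Fintype.sum_bool, hfiber, hfiber, add_comm]

theorem boundary_slice_subset (b : Bool) (S : Finset (Fin (n + 1) → Bool)) :
    boundary (slice b S) ⊆ slice b (boundary S) := by
  intro x hx
  simp only [boundary, mem_filter, mem_univ, true_and, mem_slice] at hx ⊢
  obtain ⟨hxS, x', hx'S, hdist⟩ := hx
  exact ⟨hxS, Fin.cons b x', hx'S, by simp [hammingDist_cons, hdist]⟩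

theorem slice_not_sdiff_slice_subset (b : Bool) (S : Finset (Fin (n + 1) → Bool)) :
    slice (!b) S \ slice b S ⊆ slice b (boundary S) := by
  intro x hx
  simp only [mem_sdiff, mem_slice] at hx
  simp only [boundary, mem_filter, mem_univ, true_and, mem_slice]
  exact ⟨hx.2, Fin.cons (!b) x, hx.1, by simp [hammingDist_cons]⟩

theorem card_mul_sub_card_le (S : Finset (Fin n → Bool)) :
    #S * (2 ^ n - #S : ℝ) ≤ √n * 2 ^ n * #(boundary S) := by
  induction n with
  | zero =>
    have hS : #S ≤ 1 := by simpa using card_le_univ S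
    interval_cases #S <;> simp
  | succ n ih =>
    have hcard (b : Bool) : (#(slice b S) : ℝ) ≤ 2 ^ n := by
      exact_mod_cast (card_le_univ (slice b S)).trans_eq (by simp)
    have hhalf (b : Bool) :
        #(slice b S) * (2 ^ n - #(slice b S) : ℝ) ≤ √n * 2 ^ n * #(slice b (boundary S)) :=
      (ih _).trans (by gcongr; exact boundary_slice_subset b S)
    have hdiff (b : Bool) : (#(slice (!b) S) : ℝ) - #(slice b S) ≤ #(slice b (boundary S)) := by
      have hsplit : (#(slice (!b) S) : ℝ) ≤ #(slice (!b) S \ slice b S) + #(slice b S) := by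
        exact_mod_cast card_le_card_sdiff_add_card
      have hsdiff : (#(slice (!b) S \ slice b S) : ℝ) ≤ #(slice b (boundary S)) := by
        exact_mod_cast card_le_card (slice_not_sdiff_slice_subset b S)
      linarith
    have hS : (#(slice false S) + #(slice true S) : ℝ) = #S := by
      exact_mod_cast card_slice_false_add_card_slice_true S
    have hB : (#(slice false (boundary S)) + #(slice true (boundary S)) : ℝ) = #(boundary S) := by
      exact_mod_cast card_slice_false_add_card_slice_true (boundary S)
    have hgap : |(#(slice false S) : ℝ) - #(slice true S)| ≤ #(boundary S) := by
      have h₀ := hdiff false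
      have h₁ := hdiff true
      simp only [Bool.not_false, Bool.not_true] at h₀ h₁
      have : (0 : ℝ) ≤ #(slice false (boundary S)) ∧ (0 : ℝ) ≤ #(slice true (boundary S)) :=
        ⟨by positivity, by positivity⟩
      rw [abs_sub_le_iff]
      constructor <;> linarith
    have key := mul_two_mul_sub_le_of_halves (a := √n) (b := √(n + 1)) (β := #(boundary S))
      (Real.sqrt_nonneg _) (by simp [Real.sq_sqrt, add_nonneg]) (Nat.cast_nonneg _)
      (hcard false) (Nat.cast_nonneg _) (hcard true)
      (by rw [← hB, mul_add]; exact add_le_add (hhalf false) (hhalf true))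
      hgap
    rw [hS] at key
    rw [pow_succ]
    push_cast
    linarith

end Hypercube

theorem hypercube_vertex_isoperimetry :
    ∃ c : ℝ, 0 < c ∧
      ∀ n : ℕ, 1 ≤ n → ∀ S : Finset (Fin n → Bool),
        (c / Real.sqrt n) * (S.card : ℝ) * (1 - (S.card : ℝ) / 2^n) ≤
          ((Finset.univ.filter (fun y : Fin n → Bool =>
            y ∉ S ∧ ∃ x ∈ S, hammingDist x y = 1)).card : ℝ) := by
  refine ⟨1, one_pos, fun n hn S => ?_⟩
  have hsqrt : 0 < √(n : ℝ) := Real.sqrt_pos.mpr (by exact_mod_cast hn)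
  calc 1 / √n * #S * (1 - #S / 2 ^ n) = #S * (2 ^ n - #S : ℝ) / (√n * 2 ^ n) := by
        field_simp
    _ ≤ #(Hypercube.boundary S) := by
        rw [div_le_iff₀ (by positivity)]
        linarith [Hypercube.card_mul_sub_card_le S]
end
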